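/- arXiv:2205.12513 — 12 statements merged into one kernel-verified Lean document; each statement's English description precedes it below -/
import Mathlib

section
/- For every Λ > 0 the function c_{0,Λ} : ℝ → (0, ∞) is infinitely differentiable (C^∞) on ℝ, and consequently each function c_{i,Λ} for i = 1, …, N is a positive C^∞ function on ℝ. -/
/-!
The defining relation says that the graph of `c_{0,Λ}` is the level set `{F = μ₀}` of the smooth
function `F (φ, c) = ln c + Λ λ₀ ∑ λ_j c^{λ_j/λ₀} e^{μ̄_j - z_j φ}` on `ℝ × (0, ∞)`. Since
`∂_c F ≥ 1 / c > 0`, the implicit function theorem gives a smooth local solution around every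
point of the graph, and strict monotonicity of `F` in `c` forces it to agree with `c_{0,Λ}`.
The `c_{i,Λ}` are then products of powers of `c_{0,Λ}` with exponentials.
-/

open Filter Real Set
open scoped Topology ContDiff

section ImplicitFunction

variable {𝕜 : Type*} [RCLike 𝕜]
  {E₁ : Type*} [NormedAddCommGroup E₁] [NormedSpace 𝕜 E₁] [CompleteSpace E₁]
  {E₂ : Type*} [NormedAddCommGroup E₂] [NormedSpace 𝕜 E₂] [CompleteSpace E₂]
  {F : Type*} [NormedAddCommGroup F] [NormedSpace 𝕜 F] [CompleteSpace F]

/-- Injectivity of the fibres identifies `c` with the implicit function, so no a priori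
continuity of `c` is needed. -/
theorem contDiffAt_of_apply_eq_of_injOn {f : E₁ × E₂ → F} {c : E₁ → E₂} {x₀ : E₁}
    {s : Set E₂} {n : WithTop ℕ∞} (hf : ContDiffAt 𝕜 n f (x₀, c x₀)) (hn : n ≠ 0)
    (hinv : (fderiv 𝕜 f (x₀, c x₀) ∘L .inr 𝕜 E₁ E₂).IsInvertible) (hs : s ∈ 𝓝 (c x₀))
    (hinj : ∀ᶠ x in 𝓝 x₀, InjOn (fun t => f (x, t)) s)
    (hc : ∀ᶠ x in 𝓝 x₀, c x ∈ s ∧ f (x, c x) = f (x₀, c x₀)) :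
    ContDiffAt 𝕜 n c x₀ := by
  set ψ := hf.implicitFunction hn hinv
  have hψ₀ : ψ x₀ = c x₀ := hf.implicitFunction_apply_self hn hinv
  have hψ : ContinuousAt ψ x₀ := (hf.hasStrictFDerivAt_implicitFunction hn hinv).continuousAt
  have hψs : ∀ᶠ x in 𝓝 x₀, ψ x ∈ s := hψ.preimage_mem_nhds (hψ₀ ▸ hs)
  have hψc : ψ =ᶠ[𝓝 x₀] c := by
    filter_upwards [hinj, hc, hψs, hf.eventually_apply_implicitFunction hn hinv]
      with x hinj_x ⟨hcs, hcx⟩ hψs_x hψx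
    exact hinj_x hψs_x hcs (hψx.trans hcx.symm)
  exact (hf.contDiffAt_implicitFunction hn hinv).congr_of_eventuallyEq hψc.symm

end ImplicitFunction

theorem isInvertible_fderiv_comp_inr_of_hasDerivAt {𝕜 : Type*} [NontriviallyNormedField 𝕜]
    {E : Type*} [NormedAddCommGroup E] [NormedSpace 𝕜 E] {f : E × 𝕜 → 𝕜} {u : E × 𝕜} {d : 𝕜}
    (hf : DifferentiableAt 𝕜 f u) (hd : HasDerivAt (fun t => f (u.1, t)) d u.2) (hd₀ : d ≠ 0) :
    (fderiv 𝕜 f u ∘L .inr 𝕜 E 𝕜).IsInvertible := by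
  have hcomp : HasFDerivAt (fun t => f (u.1, t)) (fderiv 𝕜 f u ∘L .inr 𝕜 E 𝕜) u.2 :=
    hf.hasFDerivAt.comp u.2 (hasFDerivAt_prodMk_right u.1 u.2)
  rw [hcomp.unique hd.hasFDerivAt]
  exact ContinuousLinearMap.IsInvertible.of_inverse (g := .toSpanSingleton 𝕜 d⁻¹)
    (by ext; simp [hd₀]) (by ext; simp [hd₀])

/-- `ln c + K ∑ b_j c^{a_j} e^{m_j - z_j φ}` at `p = (φ, c)`. With `K = Λ λ₀`, `b = λ`,
`a_j = λ_j / λ₀` and `m = μ̄`, the graph of `c_{0,Λ}` is its level set at `μ₀`. -/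
noncomputable def solventPotential (s : Finset ℕ) (K : ℝ) (b a m z : ℕ → ℝ) (p : ℝ × ℝ) : ℝ :=
  Real.log p.2 + K * ∑ j ∈ s, b j * p.2 ^ a j * Real.exp (m j - z j * p.1)

namespace solventPotential

variable {s : Finset ℕ} {K : ℝ} {b a m z : ℕ → ℝ}

theorem contDiffAt {n : WithTop ℕ∞} {p : ℝ × ℝ} (hp : 0 < p.2) :
    ContDiffAt ℝ n (solventPotential s K b a m z) p := by
  refine ((contDiffAt_log.mpr hp.ne').comp p contDiffAt_snd).add
    (contDiffAt_const.mul (ContDiffAt.sum fun j _ => ?_))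
  exact (contDiffAt_const.mul (contDiffAt_snd.rpow_const_of_ne hp.ne')).mul
    (contDiffAt_const.sub (contDiffAt_const.mul contDiffAt_fst)).exp

theorem hasDerivAt_snd {φ t : ℝ} (ht : 0 < t) :
    HasDerivAt (fun t => solventPotential s K b a m z (φ, t))
      (t⁻¹ + K * ∑ j ∈ s, b j * (a j * t ^ (a j - 1)) * Real.exp (m j - z j * φ)) t := by
  dsimp only [solventPotential]
  exact (hasDerivAt_log ht.ne').add <| .const_mul K <| .fun_sum fun j _ =>
    ((hasDerivAt_rpow_const (.inl ht.ne')).const_mul (b j)).mul_const _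

variable (hK : 0 ≤ K) (hb : ∀ j ∈ s, 0 ≤ b j) (ha : ∀ j ∈ s, 0 ≤ a j)
include hK hb ha

theorem strictMonoOn_snd (φ : ℝ) :
    StrictMonoOn (fun t => solventPotential s K b a m z (φ, t)) (Ioi 0) := by
  intro t ht u _ htu
  refine add_lt_add_of_lt_of_le (log_lt_log ht htu) (mul_le_mul_of_nonneg_left ?_ hK)
  gcongr with j hj
  exacts [hb j hj, le_of_lt ht, ha j hj]

theorem deriv_snd_pos {φ t : ℝ} (ht : 0 < t) :
    0 < deriv (fun t => solventPotential s K b a m z (φ, t)) t := by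
  rw [(hasDerivAt_snd ht).deriv]
  refine add_pos_of_pos_of_nonneg (inv_pos.mpr ht)
    (mul_nonneg hK (Finset.sum_nonneg fun j hj => ?_))
  have := hb j hj; have := ha j hj
  positivity

theorem contDiff_of_eq {c : ℝ → ℝ} {M : ℝ} {n : WithTop ℕ∞} (hc : ∀ φ, 0 < c φ)
    (heq : ∀ φ, solventPotential s K b a m z (φ, c φ) = M) : ContDiff ℝ n c := by
  refine contDiff_iff_contDiffAt.mpr fun φ => ContDiffAt.of_le (n := ω) ?_ le_top
  have hf : ContDiffAt ℝ ω (solventPotential s K b a m z) (φ, c φ) := contDiffAt (hc φ)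
  refine contDiffAt_of_apply_eq_of_injOn hf (by simp) ?_ (Ioi_mem_nhds (hc φ))
    (.of_forall fun x => (strictMonoOn_snd hK hb ha x).injOn)
    (.of_forall fun x => ⟨hc x, (heq x).trans (heq φ).symm⟩)
  exact isInvertible_fderiv_comp_inr_of_hasDerivAt (hf.differentiableAt (by simp))
    (hasDerivAt_snd (hc φ)).differentiableAt.hasDerivAt (deriv_snd_pos hK hb ha (hc φ)).ne'

end solventPotential

theorem stmt1_general
    (N : ℕ)
    (z lam μhat : ℕ → ℝ) (μtilde0 : ℝ)
    (hlam : ∀ i, i ≤ N → 0 < lam i)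
    (μbar : ℕ → ℝ)
    (Λ : ℝ) (hΛ : 0 < Λ)
    (c0 : ℝ → ℝ) (hc0pos : ∀ φ, 0 < c0 φ)
    (hc0eq : ∀ φ : ℝ, Real.log (c0 φ)
        + Λ * lam 0 * ∑ j ∈ Finset.range (N+1),
            lam j * (c0 φ) ^ (lam j / lam 0) * Real.exp (μbar j - z j * φ)
      = Λ * lam 0 * μtilde0 + μhat 0)
    :
    (∀ n : ℕ, ContDiff ℝ n c0) ∧
    (∀ i, 1 ≤ i → i ≤ N →
      (∀ φ : ℝ, 0 < (c0 φ) ^ (lam i / lam 0) * Real.exp (μbar i - z i * φ)) ∧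
      (∀ n : ℕ, ContDiff ℝ n (fun φ : ℝ => (c0 φ) ^ (lam i / lam 0) * Real.exp (μbar i - z i * φ)))) := by
  have hlam₀ : 0 < lam 0 := hlam 0 N.zero_le
  have hlam_range : ∀ j ∈ Finset.range (N + 1), 0 < lam j :=
    fun j hj => hlam j (Finset.mem_range_succ_iff.mp hj)
  have hc0 : ContDiff ℝ ω c0 :=
    solventPotential.contDiff_of_eq (mul_pos hΛ hlam₀).le (fun j hj => (hlam_range j hj).le)
      (fun j hj => (div_pos (hlam_range j hj) hlam₀).le) hc0pos hc0eq
  refine ⟨fun n => hc0.of_le le_top, fun i _ _ => ⟨fun φ => ?_, fun n => ?_⟩⟩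
  · exact mul_pos (rpow_pos_of_pos (hc0pos φ) _) (exp_pos _)
  · exact ((hc0.rpow_const_of_ne fun φ => (hc0pos φ).ne').mul
      (contDiff_const.sub (contDiff_const.mul contDiff_id)).exp).of_le le_top

theorem stmt1
    (N : ℕ) (hN : 1 ≤ N)
    (z lam μhat : ℕ → ℝ) (μtilde0 : ℝ)
    (hz0 : z 0 = 0)
    (hzne : ∀ i, 1 ≤ i → i ≤ N → z i ≠ 0)
    (hmix : ∃ i j, 1 ≤ i ∧ i ≤ N ∧ 1 ≤ j ∧ j ≤ N ∧ z i * z j < 0)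
    (hlam : ∀ i, i ≤ N → 0 < lam i)
    (hμt : 0 < μtilde0)
    (hμhat : ∀ i, i ≤ N → 0 < μhat i)
    (μbar : ℕ → ℝ) (hμbar : ∀ i, μbar i = μhat i - lam i / lam 0 * μhat 0)
    (Λ : ℝ) (hΛ : 0 < Λ)
    (c0 : ℝ → ℝ) (hc0pos : ∀ φ, 0 < c0 φ)
    (hc0eq : ∀ φ : ℝ, Real.log (c0 φ)
        + Λ * lam 0 * ∑ j ∈ Finset.range (N+1),
            lam j * (c0 φ) ^ (lam j / lam 0) * Real.exp (μbar j - z j * φ)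
      = Λ * lam 0 * μtilde0 + μhat 0)
    :
    (∀ n : ℕ, ContDiff ℝ n c0) ∧
    (∀ i, 1 ≤ i → i ≤ N →
      (∀ φ : ℝ, 0 < (c0 φ) ^ (lam i / lam 0) * Real.exp (μbar i - z i * φ)) ∧
      (∀ n : ℕ, ContDiff ℝ n (fun φ : ℝ => (c0 φ) ^ (lam i / lam 0) * Real.exp (μbar i - z i * φ)))) :=
  stmt1_general N z lam μhat μtilde0 hlam μbar Λ hΛ c0 hc0pos hc0eq
end

section
/- Fix Λ > 0 and φ ∈ ℝ. Positive reals c_0, c_1, …, c_N satisfy the system ln c_i + z_i φ + Λ λ_i ∑_{j=0}^N λ_j c_j = μ_i for all i = 0, 1, …, N if and only if c_i = c_0^{λ_i/λ_0} exp(μ̄_i − z_i φ) for i = 1, …, N and ln c_0 + Λ λ_0 ∑_{j=0}^N λ_j c_0^{λ_j/λ_0} exp(μ̄_j − z_j φ) = μ_0. In particular, this system has a unique positive solution (c_{0,Λ}(φ), c_{1,Λ}(φ), …, c_{N,Λ}(φ)). -/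
/-!
Subtracting `λ_i / λ_0` times the equation for `i = 0` from the equation for `i` removes the
common term `Λ ∑ λ_j c_j`, which leaves `ln c_i = (λ_i / λ_0) ln c_0 + μ̄_i - z_i φ`. Substituting
these `c_i` into the equation for `i = 0` reduces the system to one equation
`ln c_0 + ∑_j b_j c_0 ^ p_j = μ_0` with `b_j, p_j ≥ 0`. Its left-hand side is a continuous,
strictly increasing function of `c_0 > 0` that takes every real value, so it has exactly one root.
-/

open Real Set Finset

section LogAddSumRpow

variable {ι : Type*} (s : Finset ι) (b p : ι → ℝ)

theorem strictMonoOn_log_add_sum_rpow (hb : ∀ j ∈ s, 0 ≤ b j) (hp : ∀ j ∈ s, 0 ≤ p j) :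
    StrictMonoOn (fun x => log x + ∑ j ∈ s, b j * x ^ p j) (Ioi 0) := by
  intro x hx y hy hxy
  have hsum : ∑ j ∈ s, b j * x ^ p j ≤ ∑ j ∈ s, b j * y ^ p j :=
    sum_le_sum fun j hj =>
      mul_le_mul_of_nonneg_left (rpow_le_rpow hx.le hxy.le (hp j hj)) (hb j hj)
  exact add_lt_add_of_lt_of_le (log_lt_log hx hxy) hsum

theorem continuousOn_log_add_sum_rpow :
    ContinuousOn (fun x => log x + ∑ j ∈ s, b j * x ^ p j) (Ioi 0) := by
  refine continuousOn_log.mono (fun x hx => ne_of_gt hx) |>.add ?_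
  refine continuousOn_finsetSum _ fun j _ => continuousOn_const.mul ?_
  exact fun x hx => (continuousAt_rpow_const x _ (Or.inl (ne_of_gt hx))).continuousWithinAt

theorem exists_pos_log_add_sum_rpow_eq (hb : ∀ j ∈ s, 0 ≤ b j) (hp : ∀ j ∈ s, 0 ≤ p j)
    (y : ℝ) : ∃ x, 0 < x ∧ log x + ∑ j ∈ s, b j * x ^ p j = y := by
  -- On `(0, 1]` the sum lies in `[0, ∑ b_j]`, so the logarithm alone brackets `y`.
  set lo := min 1 (exp (y - ∑ j ∈ s, b j))
  set hi := max 1 (exp y)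
  have hlo : 0 < lo := lt_min one_pos (exp_pos _)
  have hlo_hi : lo ≤ hi := (min_le_left _ _).trans (le_max_left _ _)
  have hf_lo : log lo + ∑ j ∈ s, b j * lo ^ p j ≤ y := by
    have hlog : log lo ≤ y - ∑ j ∈ s, b j :=
      (log_le_log hlo (min_le_right _ _)).trans_eq (log_exp _)
    have hsum : ∑ j ∈ s, b j * lo ^ p j ≤ ∑ j ∈ s, b j :=
      sum_le_sum fun j hj =>
        mul_le_of_le_one_right (hb j hj) (rpow_le_one hlo.le (min_le_left _ _) (hp j hj))
    linarith
  have hf_hi : y ≤ log hi + ∑ j ∈ s, b j * hi ^ p j := by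
    have hhi : 0 < hi := one_pos.trans_le (le_max_left _ _)
    have hlog : y ≤ log hi := (log_exp y).symm.trans_le (log_le_log (exp_pos y) (le_max_right _ _))
    have hsum : 0 ≤ ∑ j ∈ s, b j * hi ^ p j :=
      sum_nonneg fun j hj => mul_nonneg (hb j hj) (rpow_nonneg hhi.le _)
    linarith
  obtain ⟨x, hx, hfx⟩ := intermediate_value_Icc hlo_hi
    ((continuousOn_log_add_sum_rpow s b p).mono fun x hx => hlo.trans_le hx.1) ⟨hf_lo, hf_hi⟩
  exact ⟨x, hlo.trans_le hx.1, hfx⟩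

end LogAddSumRpow

theorem log_eq_mul_log_add_iff {c c₀ : ℝ} (hc : 0 < c) (hc₀ : 0 < c₀) (r t : ℝ) :
    log c = r * log c₀ + t ↔ c = c₀ ^ r * exp t := by
  rw [← exp_eq_exp, exp_log hc, exp_add, rpow_def_of_pos hc₀, mul_comm r]

section EquilibriumSystem

variable (N : ℕ) (z lam μhat μbar : ℕ → ℝ) (μtilde0 Λ φ : ℝ)

theorem rpow_mul_exp_eq_self_of_index_zero (hz0 : z 0 = 0) (hl0 : lam 0 ≠ 0)
    (hμbar : ∀ i, μbar i = μhat i - lam i / lam 0 * μhat 0) (x : ℝ) :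
    x ^ (lam 0 / lam 0) * exp (μbar 0 - z 0 * φ) = x := by
  simp [hμbar, hz0, div_self hl0]

theorem sum_lam_mul_eq_of_forall_eq_rpow_mul_exp (hz0 : z 0 = 0) (hl0 : lam 0 ≠ 0)
    (hμbar : ∀ i, μbar i = μhat i - lam i / lam 0 * μhat 0) (c : ℕ → ℝ)
    (hc : ∀ i, 1 ≤ i → i ≤ N → c i = c 0 ^ (lam i / lam 0) * exp (μbar i - z i * φ)) :
    ∑ j ∈ range (N + 1), lam j * c j
      = ∑ j ∈ range (N + 1), lam j * c 0 ^ (lam j / lam 0) * exp (μbar j - z j * φ) := by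
  refine sum_congr rfl fun j hj => ?_
  rw [mul_assoc]
  rcases Nat.eq_zero_or_pos j with rfl | hj0
  · rw [rpow_mul_exp_eq_self_of_index_zero z lam μhat μbar φ hz0 hl0 hμbar]
  · rw [hc j hj0 (Nat.lt_succ_iff.mp (mem_range.mp hj))]

theorem log_add_sum_eq_log_add_sum_rpow (x : ℝ) :
    log x + Λ * lam 0 * ∑ j ∈ range (N + 1), lam j * x ^ (lam j / lam 0) * exp (μbar j - z j * φ)
      = log x + ∑ j ∈ range (N + 1),
          Λ * lam 0 * lam j * exp (μbar j - z j * φ) * x ^ (lam j / lam 0) := by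
  rw [mul_sum]
  congr 1
  exact sum_congr rfl fun j _ => by ring

theorem equilibrium_iff (hz0 : z 0 = 0) (hl0 : lam 0 ≠ 0)
    (hμbar : ∀ i, μbar i = μhat i - lam i / lam 0 * μhat 0) (c : ℕ → ℝ)
    (hc : ∀ i, i ≤ N → 0 < c i) :
    (∀ i, i ≤ N → log (c i) + z i * φ + Λ * lam i * ∑ j ∈ range (N + 1), lam j * c j
        = Λ * lam i * μtilde0 + μhat i) ↔
      ((∀ i, 1 ≤ i → i ≤ N → c i = c 0 ^ (lam i / lam 0) * exp (μbar i - z i * φ)) ∧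
        log (c 0) + Λ * lam 0 * ∑ j ∈ range (N + 1),
            lam j * c 0 ^ (lam j / lam 0) * exp (μbar j - z j * φ)
          = Λ * lam 0 * μtilde0 + μhat 0) := by
  set S := ∑ j ∈ range (N + 1), lam j * c j with hS
  have hc0 := hc 0 (Nat.zero_le N)
  -- The `i`-th equation is `λ_i / λ_0` times the `0`-th one plus the relation between `c_i` and `c_0`.
  have decompose : ∀ i, log (c i) + z i * φ + Λ * lam i * S - (Λ * lam i * μtilde0 + μhat i)
      = lam i / lam 0 * (log (c 0) + Λ * lam 0 * S - (Λ * lam 0 * μtilde0 + μhat 0))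
        + (log (c i) - (lam i / lam 0 * log (c 0) + (μbar i - z i * φ))) := by
    intro i
    rw [hμbar]
    field_simp
    ring
  have relation_iff : ∀ i, 1 ≤ i → i ≤ N →
      (log (c i) = lam i / lam 0 * log (c 0) + (μbar i - z i * φ) ↔
        c i = c 0 ^ (lam i / lam 0) * exp (μbar i - z i * φ)) :=
    fun i _ hi => log_eq_mul_log_add_iff (hc i hi) hc0 _ _
  constructor
  · intro hsys
    have h0 : log (c 0) + Λ * lam 0 * S = Λ * lam 0 * μtilde0 + μhat 0 := by
      simpa [hz0] using hsys 0 (Nat.zero_le N)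
    have hform : ∀ i, 1 ≤ i → i ≤ N → c i = c 0 ^ (lam i / lam 0) * exp (μbar i - z i * φ) :=
      fun i hi1 hi => (relation_iff i hi1 hi).mp <| by
        linear_combination hsys i hi - lam i / lam 0 * h0 - decompose i
    refine ⟨hform, ?_⟩
    rw [← sum_lam_mul_eq_of_forall_eq_rpow_mul_exp N z lam μhat μbar φ hz0 hl0 hμbar c hform]
    exact h0
  · rintro ⟨hform, hreduced⟩ i hi
    rw [← sum_lam_mul_eq_of_forall_eq_rpow_mul_exp N z lam μhat μbar φ hz0 hl0 hμbar c hform,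
      ← hS] at hreduced
    have hrel : log (c i) = lam i / lam 0 * log (c 0) + (μbar i - z i * φ) := by
      rcases Nat.eq_zero_or_pos i with rfl | hi1
      · simp [hμbar, hz0, div_self hl0]
      · exact (relation_iff i hi1 hi).mpr (hform i hi1 hi)
    linear_combination decompose i + lam i / lam 0 * hreduced + hrel

end EquilibriumSystem

theorem stmt2_general
    (N : ℕ)
    (z lam μhat : ℕ → ℝ) (μtilde0 : ℝ)
    (hz0 : z 0 = 0)
    (hlam : ∀ i, i ≤ N → 0 < lam i)
    (μbar : ℕ → ℝ) (hμbar : ∀ i, μbar i = μhat i - lam i / lam 0 * μhat 0)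
    (Λ : ℝ) (hΛ : 0 < Λ) (φ : ℝ) :
    (∀ c : ℕ → ℝ, (∀ i, i ≤ N → 0 < c i) →
      ((∀ i, i ≤ N → Real.log (c i) + z i * φ + Λ * lam i * ∑ j ∈ Finset.range (N+1), lam j * c j = Λ * lam i * μtilde0 + μhat i) ↔
       ((∀ i, 1 ≤ i → i ≤ N → c i = (c 0) ^ (lam i / lam 0) * Real.exp (μbar i - z i * φ)) ∧ Real.log (c 0) + Λ * lam 0 * ∑ j ∈ Finset.range (N+1), lam j * (c 0) ^ (lam j / lam 0) * Real.exp (μbar j - z j * φ) = Λ * lam 0 * μtilde0 + μhat 0))) ∧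
    (∃ c : ℕ → ℝ, (∀ i, i ≤ N → 0 < c i) ∧ (∀ i, i ≤ N → Real.log (c i) + z i * φ + Λ * lam i * ∑ j ∈ Finset.range (N+1), lam j * c j = Λ * lam i * μtilde0 + μhat i)) ∧
    (∀ c c' : ℕ → ℝ, (∀ i, i ≤ N → 0 < c i) → (∀ i, i ≤ N → 0 < c' i) →
      (∀ i, i ≤ N → Real.log (c i) + z i * φ + Λ * lam i * ∑ j ∈ Finset.range (N+1), lam j * c j = Λ * lam i * μtilde0 + μhat i) → (∀ i, i ≤ N → Real.log (c' i) + z i * φ + Λ * lam i * ∑ j ∈ Finset.range (N+1), lam j * c' j = Λ * lam i * μtilde0 + μhat i) →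
      ∀ i, i ≤ N → c i = c' i) := by
  have hl0 := hlam 0 (Nat.zero_le N)
  have key := equilibrium_iff N z lam μhat μbar μtilde0 Λ φ hz0 hl0.ne' hμbar
  have hb : ∀ j ∈ range (N + 1), 0 ≤ Λ * lam 0 * lam j * exp (μbar j - z j * φ) := fun j hj => by
    have := hlam j (Nat.lt_succ_iff.mp (mem_range.mp hj))
    positivity
  have hp : ∀ j ∈ range (N + 1), 0 ≤ lam j / lam 0 := fun j hj =>
    div_nonneg (hlam j (Nat.lt_succ_iff.mp (mem_range.mp hj))).le hl0.le
  refine ⟨key, ?_, ?_⟩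
  · obtain ⟨x, hx, hroot⟩ :=
      exists_pos_log_add_sum_rpow_eq _ _ _ hb hp (Λ * lam 0 * μtilde0 + μhat 0)
    let c i := x ^ (lam i / lam 0) * exp (μbar i - z i * φ)
    have hc0 : c 0 = x := rpow_mul_exp_eq_self_of_index_zero z lam μhat μbar φ hz0 hl0.ne' hμbar x
    have hc : ∀ i, i ≤ N → 0 < c i := fun i _ => by positivity
    refine ⟨c, hc, (key c hc).mpr ⟨fun i _ _ => by rw [hc0], ?_⟩⟩
    rwa [hc0, log_add_sum_eq_log_add_sum_rpow]
  · intro c c' hc hc' hsys hsys'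
    obtain ⟨hform, hreduced⟩ := (key c hc).mp hsys
    obtain ⟨hform', hreduced'⟩ := (key c' hc').mp hsys'
    rw [log_add_sum_eq_log_add_sum_rpow] at hreduced hreduced'
    have h0 : c 0 = c' 0 := (strictMonoOn_log_add_sum_rpow _ _ _ hb hp).injOn
      (hc 0 (Nat.zero_le N)) (hc' 0 (Nat.zero_le N)) (hreduced.trans hreduced'.symm)
    intro i hi
    rcases Nat.eq_zero_or_pos i with rfl | hi1
    · exact h0
    · rw [hform i hi1 hi, hform' i hi1 hi, h0]

theorem stmt2
    (N : ℕ) (hN : 1 ≤ N)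
    (z lam μhat : ℕ → ℝ) (μtilde0 : ℝ)
    (hz0 : z 0 = 0)
    (hzne : ∀ i, 1 ≤ i → i ≤ N → z i ≠ 0)
    (hmix : ∃ i j, 1 ≤ i ∧ i ≤ N ∧ 1 ≤ j ∧ j ≤ N ∧ z i * z j < 0)
    (hlam : ∀ i, i ≤ N → 0 < lam i)
    (hμt : 0 < μtilde0)
    (hμhat : ∀ i, i ≤ N → 0 < μhat i)
    (μbar : ℕ → ℝ) (hμbar : ∀ i, μbar i = μhat i - lam i / lam 0 * μhat 0)
    (Λ : ℝ) (hΛ : 0 < Λ) (φ : ℝ) :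
    (∀ c : ℕ → ℝ, (∀ i, i ≤ N → 0 < c i) →
      ((∀ i, i ≤ N → Real.log (c i) + z i * φ + Λ * lam i * ∑ j ∈ Finset.range (N+1), lam j * c j = Λ * lam i * μtilde0 + μhat i) ↔
       ((∀ i, 1 ≤ i → i ≤ N → c i = (c 0) ^ (lam i / lam 0) * Real.exp (μbar i - z i * φ)) ∧ Real.log (c 0) + Λ * lam 0 * ∑ j ∈ Finset.range (N+1), lam j * (c 0) ^ (lam j / lam 0) * Real.exp (μbar j - z j * φ) = Λ * lam 0 * μtilde0 + μhat 0))) ∧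
    (∃ c : ℕ → ℝ, (∀ i, i ≤ N → 0 < c i) ∧ (∀ i, i ≤ N → Real.log (c i) + z i * φ + Λ * lam i * ∑ j ∈ Finset.range (N+1), lam j * c j = Λ * lam i * μtilde0 + μhat i)) ∧
    (∀ c c' : ℕ → ℝ, (∀ i, i ≤ N → 0 < c i) → (∀ i, i ≤ N → 0 < c' i) →
      (∀ i, i ≤ N → Real.log (c i) + z i * φ + Λ * lam i * ∑ j ∈ Finset.range (N+1), lam j * c j = Λ * lam i * μtilde0 + μhat i) → (∀ i, i ≤ N → Real.log (c' i) + z i * φ + Λ * lam i * ∑ j ∈ Finset.range (N+1), lam j * c' j = Λ * lam i * μtilde0 + μhat i) →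
      ∀ i, i ≤ N → c i = c' i) :=
  stmt2_general N z lam μhat μtilde0 hz0 hlam μbar hμbar Λ hΛ φ
end

section
/- For every Λ > 0, the function f_Λ(φ) = ∑_{i=1}^N z_i c_{i,Λ}(φ) is strictly decreasing on ℝ. -/
/-!
Write `t = log c₀` and `w_j(φ) = (λ_j/λ_0) t(φ) + μ̄_j - z_j φ`, so that `c_j = exp w_j` and the
defining equation reads `t + Λ λ_0² ∑ (λ_j/λ_0) exp w_j = const`. For `φ₁ < φ₂`, with increments
`Δt`, `Δφ`, `Δw_j = (λ_j/λ_0) Δt - z_j Δφ`, substituting `z_j Δφ = (λ_j/λ_0) Δt - Δw_j` and using the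
defining equation gives
  `Λ λ_0² Δφ Δf = -Δt² - Λ λ_0² ∑ Δw_j (exp w_j(φ₂) - exp w_j(φ₁))`,
whose right-hand side is negative: each summand is nonnegative because `exp` is increasing, and when
`Δt = 0` the summand of an index with `z_j ≠ 0` is positive.
-/

open Filter Real Set

lemma StrictMono.sub_mul_sub_pos {R : Type*} [CommRing R] [LinearOrder R] [IsStrictOrderedRing R]
    {f : R → R} (hf : StrictMono f) {x y : R} (h : x ≠ y) : 0 < (x - y) * (f x - f y) := by
  rcases h.lt_or_gt with h | h
  · exact mul_pos_of_neg_of_neg (sub_neg.2 h) (sub_neg.2 (hf h))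
  · exact mul_pos (sub_pos.2 h) (sub_pos.2 (hf h))

lemma StrictMono.sub_mul_sub_nonneg {R : Type*} [CommRing R] [LinearOrder R]
    [IsStrictOrderedRing R] {f : R → R} (hf : StrictMono f) (x y : R) :
    0 ≤ (x - y) * (f x - f y) := by
  rcases eq_or_ne x y with rfl | h
  · simp
  · exact (hf.sub_mul_sub_pos h).le

theorem strictAnti_sum_mul_exp_of_add_sum_exp_eq {ι : Type*} (s : Finset ι) (a b z : ι → ℝ)
    {κ : ℝ} (hκ : 0 < κ) (C : ℝ) (t : ℝ → ℝ)
    (ht : ∀ φ, t φ + κ * ∑ j ∈ s, a j * exp (a j * t φ + b j - z j * φ) = C)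
    (hz : ∃ j ∈ s, z j ≠ 0) :
    StrictAnti fun φ => ∑ j ∈ s, z j * exp (a j * t φ + b j - z j * φ) := by
  intro φ₁ φ₂ hφ
  set w : ι → ℝ → ℝ := fun j φ => a j * t φ + b j - z j * φ with hw
  set P := ∑ j ∈ s, (w j φ₂ - w j φ₁) * (exp (w j φ₂) - exp (w j φ₁)) with hP
  have hP_nonneg : 0 ≤ P :=
    Finset.sum_nonneg fun j _ => exp_strictMono.sub_mul_sub_nonneg _ _
  have hpos : 0 < (t φ₂ - t φ₁) ^ 2 + κ * P := by
    rcases eq_or_ne (t φ₂) (t φ₁) with h | h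
    · obtain ⟨j, hj, hzj⟩ := hz
      have hwj : w j φ₂ ≠ w j φ₁ := by
        simp only [hw, h, ne_eq, sub_right_inj, mul_eq_mul_left_iff, hzj, or_false]
        exact hφ.ne'
      have : 0 < P := Finset.sum_pos' (fun j _ => exp_strictMono.sub_mul_sub_nonneg _ _)
        ⟨j, hj, exp_strictMono.sub_mul_sub_pos hwj⟩
      positivity
    · have := sq_pos_of_ne_zero (sub_ne_zero.2 h)
      positivity
  have hsum : κ * ∑ j ∈ s, a j * (exp (w j φ₂) - exp (w j φ₁)) = -(t φ₂ - t φ₁) := by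
    simp only [mul_sub, Finset.sum_sub_distrib]
    linarith [ht φ₁, ht φ₂]
  have key : κ * ((φ₂ - φ₁) * (∑ j ∈ s, z j * exp (w j φ₂) - ∑ j ∈ s, z j * exp (w j φ₁))) =
      -((t φ₂ - t φ₁) ^ 2 + κ * P) :=
    calc _ = (t φ₂ - t φ₁) * (κ * ∑ j ∈ s, a j * (exp (w j φ₂) - exp (w j φ₁))) - κ * P := by
          simp only [hP, ← Finset.sum_sub_distrib, Finset.mul_sum, ← mul_sub]
          -- termwise, `z_j Δφ = a_j Δt - Δw_j`
          refine Finset.sum_congr rfl fun j _ => ?_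
          simp only [hw]
          ring
      _ = _ := by rw [hsum]; ring
  have hneg := key ▸ neg_neg_of_pos hpos
  exact sub_neg.1 (neg_of_mul_neg_right (neg_of_mul_neg_right hneg hκ.le) (sub_pos.2 hφ).le)

theorem stmt3_general
    (N : ℕ) (hN : 1 ≤ N)
    (z lam μhat : ℕ → ℝ) (μtilde0 : ℝ)
    (hz0 : z 0 = 0)
    (hzne : ∀ i, 1 ≤ i → i ≤ N → z i ≠ 0)
    (hlam : ∀ i, i ≤ N → 0 < lam i)
    (μbar : ℕ → ℝ)
    (Λ : ℝ) (hΛ : 0 < Λ)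
    (c0 : ℝ → ℝ) (hc0pos : ∀ φ, 0 < c0 φ)
    (hc0eq : ∀ φ : ℝ, Real.log (c0 φ)
        + Λ * lam 0 * ∑ j ∈ Finset.range (N+1),
            lam j * (c0 φ) ^ (lam j / lam 0) * Real.exp (μbar j - z j * φ)
      = Λ * lam 0 * μtilde0 + μhat 0)
    :
    StrictAnti (fun φ : ℝ => ∑ i ∈ Finset.Icc 1 N, z i * ((c0 φ) ^ (lam i / lam 0) * Real.exp (μbar i - z i * φ))) := by
  have hlam0 : 0 < lam 0 := hlam 0 N.zero_le
  have hc : ∀ φ j, c0 φ ^ (lam j / lam 0) * exp (μbar j - z j * φ) =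
      exp (lam j / lam 0 * log (c0 φ) + μbar j - z j * φ) := by
    intro φ j
    rw [rpow_def_of_pos (hc0pos φ), ← exp_add]
    ring_nf
  have ht : ∀ φ, log (c0 φ) + Λ * lam 0 ^ 2 * ∑ j ∈ Finset.range (N + 1), lam j / lam 0 *
      exp (lam j / lam 0 * log (c0 φ) + μbar j - z j * φ) = Λ * lam 0 * μtilde0 + μhat 0 := by
    intro φ
    rw [← hc0eq φ, Finset.mul_sum, Finset.mul_sum]
    congr 1
    refine Finset.sum_congr rfl fun j _ => ?_
    rw [mul_assoc (lam j), hc]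
    field_simp
  have hsplit : ∀ f : ℕ → ℝ, ∑ i ∈ Finset.range (N + 1), z i * f i =
      ∑ i ∈ Finset.Icc 1 N, z i * f i := fun f => by
    rw [Finset.sum_range_eq_add_Ico _ (by omega : 0 < N + 1), Finset.Ico_add_one_right_eq_Icc, hz0,
      zero_mul, zero_add]
  simpa only [hc, hsplit] using strictAnti_sum_mul_exp_of_add_sum_exp_eq (Finset.range (N + 1))
    (fun j => lam j / lam 0) μbar z (by positivity) _ (fun φ => log (c0 φ)) ht
    ⟨1, Finset.mem_range.2 (by omega), hzne 1 le_rfl hN⟩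

theorem stmt3
    (N : ℕ) (hN : 1 ≤ N)
    (z lam μhat : ℕ → ℝ) (μtilde0 : ℝ)
    (hz0 : z 0 = 0)
    (hzne : ∀ i, 1 ≤ i → i ≤ N → z i ≠ 0)
    (hmix : ∃ i j, 1 ≤ i ∧ i ≤ N ∧ 1 ≤ j ∧ j ≤ N ∧ z i * z j < 0)
    (hlam : ∀ i, i ≤ N → 0 < lam i)
    (hμt : 0 < μtilde0)
    (hμhat : ∀ i, i ≤ N → 0 < μhat i)
    (μbar : ℕ → ℝ) (hμbar : ∀ i, μbar i = μhat i - lam i / lam 0 * μhat 0)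
    (Λ : ℝ) (hΛ : 0 < Λ)
    (c0 : ℝ → ℝ) (hc0pos : ∀ φ, 0 < c0 φ)
    (hc0eq : ∀ φ : ℝ, Real.log (c0 φ)
        + Λ * lam 0 * ∑ j ∈ Finset.range (N+1),
            lam j * (c0 φ) ^ (lam j / lam 0) * Real.exp (μbar j - z j * φ)
      = Λ * lam 0 * μtilde0 + μhat 0)
    :
    StrictAnti (fun φ : ℝ => ∑ i ∈ Finset.Icc 1 N, z i * ((c0 φ) ^ (lam i / lam 0) * Real.exp (μbar i - z i * φ))) :=
  stmt3_general N hN z lam μhat μtilde0 hz0 hzne hlam μbar Λ hΛ c0 hc0pos hc0eq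
end

section
/- For every Λ > 0 and every k ∈ {0, 1, …, N}: if z_k ≥ 0 then c_{k,Λ}(φ) ≤ exp(μ_k) for all φ ≥ 0, and if z_k ≤ 0 then c_{k,Λ}(φ) ≤ exp(μ_k) for all φ ≤ 0. -/
/-!
Every term of the sum in the defining equation of `c0` is nonnegative, so
`log c0 ≤ μ_0`. Raising to the power `λ_k / λ_0` and multiplying by
`exp (μ̄_k - z_k φ)` gives `c_k ≤ exp (μ_k - z_k φ)`, and `z_k φ ≥ 0` on the
half-line in question.
-/

open Filter Real Set

lemma rpow_mul_exp_le_exp_of_log_le {c r m a : ℝ} (hc : 0 < c) (hr : 0 ≤ r)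
    (hlog : log c ≤ m) : c ^ r * exp a ≤ exp (r * m + a) := by
  rw [rpow_def_of_pos hc, ← exp_add, exp_le_exp]
  nlinarith

theorem stmt4_general
    (N : ℕ)
    (z lam μhat : ℕ → ℝ) (μtilde0 : ℝ)
    (hlam : ∀ i, i ≤ N → 0 < lam i)
    (μbar : ℕ → ℝ) (hμbar : ∀ i, μbar i = μhat i - lam i / lam 0 * μhat 0)
    (Λ : ℝ) (hΛ : 0 < Λ)
    (c0 : ℝ → ℝ) (hc0pos : ∀ φ, 0 < c0 φ)
    (hc0eq : ∀ φ : ℝ, Real.log (c0 φ)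
        + Λ * lam 0 * ∑ j ∈ Finset.range (N+1),
            lam j * (c0 φ) ^ (lam j / lam 0) * Real.exp (μbar j - z j * φ)
      = Λ * lam 0 * μtilde0 + μhat 0)
    (k : ℕ) (hk : k ≤ N) :
    (0 ≤ z k → ∀ φ : ℝ, 0 ≤ φ →
      (c0 φ) ^ (lam k / lam 0) * Real.exp (μbar k - z k * φ) ≤ Real.exp (Λ * lam k * μtilde0 + μhat k)) ∧
    (z k ≤ 0 → ∀ φ : ℝ, φ ≤ 0 →
      (c0 φ) ^ (lam k / lam 0) * Real.exp (μbar k - z k * φ) ≤ Real.exp (Λ * lam k * μtilde0 + μhat k)) := by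
  have hl0 := hlam 0 N.zero_le
  have hsum_nonneg (φ : ℝ) : 0 ≤ ∑ j ∈ Finset.range (N+1),
      lam j * (c0 φ) ^ (lam j / lam 0) * exp (μbar j - z j * φ) :=
    Finset.sum_nonneg fun j hj => by
      have := hlam j (Finset.mem_range_succ_iff.mp hj)
      have := hc0pos φ
      positivity
  have hlog (φ : ℝ) : log (c0 φ) ≤ Λ * lam 0 * μtilde0 + μhat 0 := by
    have := mul_nonneg (mul_nonneg hΛ.le hl0.le) (hsum_nonneg φ)
    linarith [hc0eq φ]
  have hμk : lam k / lam 0 * (Λ * lam 0 * μtilde0 + μhat 0) + μbar k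
      = Λ * lam k * μtilde0 + μhat k := by
    rw [hμbar]
    field_simp
    ring
  have key (φ : ℝ) (hφ : 0 ≤ z k * φ) : (c0 φ) ^ (lam k / lam 0) * exp (μbar k - z k * φ)
      ≤ exp (Λ * lam k * μtilde0 + μhat k) :=
    calc _ ≤ exp (lam k / lam 0 * (Λ * lam 0 * μtilde0 + μhat 0) + (μbar k - z k * φ)) :=
          rpow_mul_exp_le_exp_of_log_le (hc0pos φ) (div_pos (hlam k hk) hl0).le (hlog φ)
      _ ≤ _ := by
          rw [exp_le_exp]
          linarith
  exact ⟨fun hz φ hφ => key φ (mul_nonneg hz hφ),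
    fun hz φ hφ => key φ (mul_nonneg_of_nonpos_of_nonpos hz hφ)⟩

theorem stmt4
    (N : ℕ) (hN : 1 ≤ N)
    (z lam μhat : ℕ → ℝ) (μtilde0 : ℝ)
    (hz0 : z 0 = 0)
    (hzne : ∀ i, 1 ≤ i → i ≤ N → z i ≠ 0)
    (hmix : ∃ i j, 1 ≤ i ∧ i ≤ N ∧ 1 ≤ j ∧ j ≤ N ∧ z i * z j < 0)
    (hlam : ∀ i, i ≤ N → 0 < lam i)
    (hμt : 0 < μtilde0)
    (hμhat : ∀ i, i ≤ N → 0 < μhat i)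
    (μbar : ℕ → ℝ) (hμbar : ∀ i, μbar i = μhat i - lam i / lam 0 * μhat 0)
    (Λ : ℝ) (hΛ : 0 < Λ)
    (c0 : ℝ → ℝ) (hc0pos : ∀ φ, 0 < c0 φ)
    (hc0eq : ∀ φ : ℝ, Real.log (c0 φ)
        + Λ * lam 0 * ∑ j ∈ Finset.range (N+1),
            lam j * (c0 φ) ^ (lam j / lam 0) * Real.exp (μbar j - z j * φ)
      = Λ * lam 0 * μtilde0 + μhat 0)
    (k : ℕ) (hk : k ≤ N) :
    (0 ≤ z k → ∀ φ : ℝ, 0 ≤ φ →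
      (c0 φ) ^ (lam k / lam 0) * Real.exp (μbar k - z k * φ) ≤ Real.exp (Λ * lam k * μtilde0 + μhat k)) ∧
    (z k ≤ 0 → ∀ φ : ℝ, φ ≤ 0 →
      (c0 φ) ^ (lam k / lam 0) * Real.exp (μbar k - z k * φ) ≤ Real.exp (Λ * lam k * μtilde0 + μhat k)) :=
  stmt4_general N z lam μhat μtilde0 hlam μbar hμbar Λ hΛ c0 hc0pos hc0eq k hk
end

section
/- For every Λ > 0 there exist indices i_0, j_0 ∈ {1, …, N} with z_{i_0} > 0 and z_{j_0} < 0 such that limsup_{φ → −∞} c_{i_0,Λ}(φ) = ∞ and limsup_{φ → +∞} c_{j_0,Λ}(φ) = ∞ (that is: for every R > 0 and every M > 0 there exists φ < −M with c_{i_0,Λ}(φ) > R, and there exists φ > M with c_{j_0,Λ}(φ) > R). -/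
/-!
Let `i` maximise `z i / lam i` (so `z i > 0`), and suppose `c_i` stays bounded as `φ → -∞`.
Since `log c_j - (λ_j/λ_i) log c_i` is affine in `φ` with slope `(λ_j/λ_i) z_i - z_j ≥ 0`,
every `c_j` is then bounded for `φ ≤ 0`. The defining equation of `c_0` turns this into a lower
bound on `log c_0`, and then `log c_i = (λ_i/λ_0) log c_0 + μ̄_i - z_i φ → ∞`, a contradiction.
The case `φ → +∞` is the same argument for `-z` and `φ ↦ c_0 (-φ)`.
-/

open Filter Real Set

/-- The paper's `c_{i,Λ}`, with `c0 = c_{0,Λ}`. -/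
noncomputable def concentration (c0 : ℝ → ℝ) (lam μbar z : ℕ → ℝ) (i : ℕ) (φ : ℝ) : ℝ :=
  c0 φ ^ (lam i / lam 0) * exp (μbar i - z i * φ)

section Concentration

variable {c0 : ℝ → ℝ} {lam μbar z : ℕ → ℝ} {i j : ℕ} {φ : ℝ}

theorem concentration_eq_exp (hc : 0 < c0 φ) :
    concentration c0 lam μbar z i φ = exp (lam i / lam 0 * log (c0 φ) + (μbar i - z i * φ)) := by
  rw [concentration, rpow_def_of_pos hc, exp_add, mul_comm (log _)]

theorem concentration_comp_neg :
    concentration (fun ψ => c0 (-ψ)) lam μbar (fun k => -z k) i φ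
      = concentration c0 lam μbar z i (-φ) := by
  simp [concentration]

theorem concentration_eq_rpow_mul (hc : 0 < c0 φ) (hi : lam i ≠ 0) :
    concentration c0 lam μbar z j φ
      = concentration c0 lam μbar z i φ ^ (lam j / lam i)
        * exp (μbar j - lam j / lam i * μbar i) * exp ((lam j / lam i * z i - z j) * φ) := by
  simp only [concentration_eq_exp hc, ← exp_mul, ← exp_add]
  congr 1
  field_simp
  ring

theorem concentration_le_of_le (hc : 0 < c0 φ) (hi : 0 < lam i) (hj : 0 ≤ lam j)
    (hij : z j * lam i ≤ z i * lam j) (hφ : φ ≤ 0) {R : ℝ}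
    (hR : concentration c0 lam μbar z i φ ≤ R) :
    concentration c0 lam μbar z j φ ≤ R ^ (lam j / lam i) * exp (μbar j - lam j / lam i * μbar i) := by
  have hslope : 0 ≤ lam j / lam i * z i - z j := by
    rw [div_mul_eq_mul_div, sub_nonneg, le_div_iff₀ hi]
    linarith
  have hpos : 0 < concentration c0 lam μbar z i φ := by
    rw [concentration_eq_exp hc]
    exact exp_pos _
  rw [concentration_eq_rpow_mul hc hi.ne']
  calc _ ≤ R ^ (lam j / lam i) * exp (μbar j - lam j / lam i * μbar i) * 1 := by
        gcongr
        · exact mul_nonneg (rpow_nonneg (hpos.le.trans hR) _) (exp_pos _).le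
        · exact exp_le_one_iff.mpr (mul_nonpos_of_nonneg_of_nonpos hslope hφ)
    _ = _ := mul_one _

end Concentration

section Blowup

variable {N : ℕ} {c0 : ℝ → ℝ} {lam μbar z : ℕ → ℝ} {Λ μ0 : ℝ}

theorem le_log_of_concentration_le {φ : ℝ} (hΛ : 0 ≤ Λ) (hlam : ∀ j ≤ N, 0 < lam j)
    (heq : log (c0 φ) + Λ * lam 0 * ∑ j ∈ Finset.range (N + 1),
      lam j * concentration c0 lam μbar z j φ = μ0)
    {B : ℕ → ℝ} (hB : ∀ j ≤ N, concentration c0 lam μbar z j φ ≤ B j) :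
    μ0 - Λ * lam 0 * ∑ j ∈ Finset.range (N + 1), lam j * B j ≤ log (c0 φ) := by
  have hsum : ∑ j ∈ Finset.range (N + 1), lam j * concentration c0 lam μbar z j φ
      ≤ ∑ j ∈ Finset.range (N + 1), lam j * B j := by
    refine Finset.sum_le_sum fun j hj => ?_
    have hjN : j ≤ N := Nat.lt_succ_iff.mp (Finset.mem_range.mp hj)
    exact mul_le_mul_of_nonneg_left (hB j hjN) (hlam j hjN).le
  have hcoef : 0 ≤ Λ * lam 0 := mul_nonneg hΛ (hlam 0 N.zero_le).le
  nlinarith [mul_le_mul_of_nonneg_left hsum hcoef]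

theorem exists_lt_concentration_of_forall_mul_le (hc0 : ∀ φ, 0 < c0 φ)
    (hlam : ∀ j ≤ N, 0 < lam j) (hΛ : 0 ≤ Λ)
    (heq : ∀ φ, log (c0 φ) + Λ * lam 0 * ∑ j ∈ Finset.range (N + 1),
      lam j * concentration c0 lam μbar z j φ = μ0)
    {i : ℕ} (hiN : i ≤ N) (hzi : 0 < z i) (hmax : ∀ j ≤ N, z j * lam i ≤ z i * lam j)
    (R M : ℝ) : ∃ φ < -M, R < concentration c0 lam μbar z i φ := by
  by_contra! hbdd
  set lb := μ0 - Λ * lam 0 * ∑ j ∈ Finset.range (N + 1),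
    lam j * (R ^ (lam j / lam i) * exp (μbar j - lam j / lam i * μbar i))
  have hlow : ∀ φ < -M, φ ≤ 0 → lb ≤ log (c0 φ) := fun φ hφM hφ0 =>
    le_log_of_concentration_le hΛ hlam (heq φ) fun j hj =>
      concentration_le_of_le (hc0 φ) (hlam i hiN) (hlam j hj).le (hmax j hj) hφ0 (hbdd φ hφM)
  have hgrow : Tendsto (fun φ => exp (lam i / lam 0 * lb + (μbar i - z i * φ))) atBot atTop := by
    refine tendsto_exp_atTop.comp (tendsto_atTop_add_const_left _ _ ?_)
    simpa only [sub_eq_add_neg, ← neg_mul, id] using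
      tendsto_atTop_add_const_left _ _ (tendsto_id.const_mul_atBot_of_neg (neg_neg_of_pos hzi))
  obtain ⟨φ, hφM, hφ0, hφR⟩ := ((eventually_lt_atBot (-M)).and
    ((eventually_le_atBot 0).and (hgrow.eventually_gt_atTop R))).exists
  refine (hbdd φ hφM).not_gt (hφR.trans_le ?_)
  rw [concentration_eq_exp (hc0 φ)]
  gcongr
  · exact div_nonneg (hlam i hiN).le (hlam 0 N.zero_le).le
  · exact hlow φ hφM hφ0

end Blowup

theorem exists_forall_mul_le_of_pos {N : ℕ} {z lam : ℕ → ℝ} (hz0 : z 0 = 0)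
    (hlam : ∀ j ≤ N, 0 < lam j) (hpos : ∃ k, 1 ≤ k ∧ k ≤ N ∧ 0 < z k) :
    ∃ i, 1 ≤ i ∧ i ≤ N ∧ 0 < z i ∧ ∀ j ≤ N, z j * lam i ≤ z i * lam j := by
  obtain ⟨k, hk1, hkN, hzk⟩ := hpos
  obtain ⟨i, hi, hmax⟩ := Finset.exists_max_image (Finset.Icc 1 N) (fun k => z k / lam k)
    ⟨k, Finset.mem_Icc.mpr ⟨hk1, hkN⟩⟩
  obtain ⟨hi1, hiN⟩ := Finset.mem_Icc.mp hi
  have hzi : 0 < z i := by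
    have := (div_pos hzk (hlam k hkN)).trans_le (hmax k (Finset.mem_Icc.mpr ⟨hk1, hkN⟩))
    exact (div_pos_iff_of_pos_right (hlam i hiN)).mp this
  refine ⟨i, hi1, hiN, hzi, fun j hjN => ?_⟩
  rcases Nat.eq_zero_or_pos j with rfl | hj1
  · rw [hz0, zero_mul]
    exact (mul_pos hzi (hlam 0 hjN)).le
  · exact (div_le_div_iff₀ (hlam j hjN) (hlam i hiN)).mp (hmax j (Finset.mem_Icc.mpr ⟨hj1, hjN⟩))

theorem stmt5_general
    (N : ℕ)
    (z lam μhat : ℕ → ℝ) (μtilde0 : ℝ)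
    (hz0 : z 0 = 0)
    (hmix : ∃ i j, 1 ≤ i ∧ i ≤ N ∧ 1 ≤ j ∧ j ≤ N ∧ z i * z j < 0)
    (hlam : ∀ i, i ≤ N → 0 < lam i)
    (μbar : ℕ → ℝ)
    (Λ : ℝ) (hΛ : 0 < Λ)
    (c0 : ℝ → ℝ) (hc0pos : ∀ φ, 0 < c0 φ)
    (hc0eq : ∀ φ : ℝ, Real.log (c0 φ)
        + Λ * lam 0 * ∑ j ∈ Finset.range (N+1),
            lam j * (c0 φ) ^ (lam j / lam 0) * Real.exp (μbar j - z j * φ)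
      = Λ * lam 0 * μtilde0 + μhat 0)
    :
    ∃ i₀ j₀ : ℕ, 1 ≤ i₀ ∧ i₀ ≤ N ∧ 1 ≤ j₀ ∧ j₀ ≤ N ∧ 0 < z i₀ ∧ z j₀ < 0 ∧
      (∀ R : ℝ, 0 < R → ∀ M : ℝ, 0 < M → ∃ φ : ℝ, φ < -M ∧
        R < (c0 φ) ^ (lam i₀ / lam 0) * Real.exp (μbar i₀ - z i₀ * φ)) ∧
      (∀ R : ℝ, 0 < R → ∀ M : ℝ, 0 < M → ∃ φ : ℝ, M < φ ∧
        R < (c0 φ) ^ (lam j₀ / lam 0) * Real.exp (μbar j₀ - z j₀ * φ)) := by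
  obtain ⟨k, l, hk1, hkN, hl1, hlN, hkl⟩ := hmix
  have hsigns : (∃ k, 1 ≤ k ∧ k ≤ N ∧ 0 < z k) ∧ ∃ k, 1 ≤ k ∧ k ≤ N ∧ 0 < -z k := by
    rcases mul_neg_iff.mp hkl with ⟨hk, hl⟩ | ⟨hk, hl⟩
    · exact ⟨⟨k, hk1, hkN, hk⟩, l, hl1, hlN, neg_pos.mpr hl⟩
    · exact ⟨⟨l, hl1, hlN, hl⟩, k, hk1, hkN, neg_pos.mpr hk⟩
  obtain ⟨i₀, hi₀1, hi₀N, hzi₀, hmax⟩ := exists_forall_mul_le_of_pos hz0 hlam hsigns.1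
  obtain ⟨j₀, hj₀1, hj₀N, hzj₀, hmin⟩ :=
    exists_forall_mul_le_of_pos (z := fun k => -z k) (by simp [hz0]) hlam hsigns.2
  have heq : ∀ φ, log (c0 φ) + Λ * lam 0 * ∑ j ∈ Finset.range (N + 1),
      lam j * concentration c0 lam μbar z j φ = Λ * lam 0 * μtilde0 + μhat 0 := by
    simpa only [concentration, mul_assoc] using hc0eq
  refine ⟨i₀, j₀, hi₀1, hi₀N, hj₀1, hj₀N, hzi₀, neg_pos.mp hzj₀,
    fun R _ M _ => exists_lt_concentration_of_forall_mul_le hc0pos hlam hΛ.le heq hi₀N hzi₀ hmax R M,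
    fun R _ M _ => ?_⟩
  obtain ⟨φ, hφM, hφR⟩ := exists_lt_concentration_of_forall_mul_le (fun φ => hc0pos (-φ)) hlam
    hΛ.le (fun φ => by simpa only [concentration_comp_neg] using heq (-φ)) hj₀N hzj₀ hmin R M
  exact ⟨-φ, by linarith, by rwa [concentration_comp_neg] at hφR⟩

theorem stmt5
    (N : ℕ) (hN : 1 ≤ N)
    (z lam μhat : ℕ → ℝ) (μtilde0 : ℝ)
    (hz0 : z 0 = 0)
    (hzne : ∀ i, 1 ≤ i → i ≤ N → z i ≠ 0)
    (hmix : ∃ i j, 1 ≤ i ∧ i ≤ N ∧ 1 ≤ j ∧ j ≤ N ∧ z i * z j < 0)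
    (hlam : ∀ i, i ≤ N → 0 < lam i)
    (hμt : 0 < μtilde0)
    (hμhat : ∀ i, i ≤ N → 0 < μhat i)
    (μbar : ℕ → ℝ) (hμbar : ∀ i, μbar i = μhat i - lam i / lam 0 * μhat 0)
    (Λ : ℝ) (hΛ : 0 < Λ)
    (c0 : ℝ → ℝ) (hc0pos : ∀ φ, 0 < c0 φ)
    (hc0eq : ∀ φ : ℝ, Real.log (c0 φ)
        + Λ * lam 0 * ∑ j ∈ Finset.range (N+1),
            lam j * (c0 φ) ^ (lam j / lam 0) * Real.exp (μbar j - z j * φ)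
      = Λ * lam 0 * μtilde0 + μhat 0)
    :
    ∃ i₀ j₀ : ℕ, 1 ≤ i₀ ∧ i₀ ≤ N ∧ 1 ≤ j₀ ∧ j₀ ≤ N ∧ 0 < z i₀ ∧ z j₀ < 0 ∧
      (∀ R : ℝ, 0 < R → ∀ M : ℝ, 0 < M → ∃ φ : ℝ, φ < -M ∧
        R < (c0 φ) ^ (lam i₀ / lam 0) * Real.exp (μbar i₀ - z i₀ * φ)) ∧
      (∀ R : ℝ, 0 < R → ∀ M : ℝ, 0 < M → ∃ φ : ℝ, M < φ ∧
        R < (c0 φ) ^ (lam j₀ / lam 0) * Real.exp (μbar j₀ - z j₀ * φ)) :=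
  stmt5_general N z lam μhat μtilde0 hz0 hmix hlam μbar Λ hΛ c0 hc0pos hc0eq
end

section
/- For every φ ∈ ℝ there exists a unique t > 0 such that ∑_{j=0}^N λ_j t^{λ_j/λ_0} exp(μ̄_j − z_j φ) = μ̃_0. The resulting function c_0^* : ℝ → (0, ∞), defined by c_0^*(φ) = this unique t, is C^∞ on ℝ, and consequently each function c_i^*(φ) = (c_0^*(φ))^{λ_i/λ_0} exp(μ̄_i − z_i φ), i = 1, …, N, is a positive C^∞ function on ℝ. -/
/-!
For fixed `φ`, the map `t ↦ ∑ λⱼ t^(λⱼ/λ₀) exp(μ̄ⱼ - zⱼ φ)` is continuous, vanishes at `0`,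
is strictly increasing on `[0, ∞)` and tends to `∞`, so it takes the value `μ̃₀` exactly once on
`(0, ∞)`. Its `t`-derivative is positive there, so the implicit function theorem yields a smooth
(indeed analytic) local solution around every `φ`, which agrees with `c₀*` by uniqueness.
-/

open Filter Real Set Topology
open scoped ContDiff

theorem existsUnique_gt_apply_eq_of_strictMonoOn {f : ℝ → ℝ} {a c : ℝ} (hf : Continuous f)
    (hmono : StrictMonoOn f (Ici a)) (hfa : f a < c) (hlim : Tendsto f atTop atTop) :
    ∃! t, a < t ∧ f t = c := by
  obtain ⟨T, hcT, haT⟩ := ((hlim.eventually_ge_atTop c).and (eventually_ge_atTop a)).exists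
  obtain ⟨t, ⟨hat, -⟩, hft⟩ := intermediate_value_Icc haT hf.continuousOn ⟨hfa.le, hcT⟩
  have hat' : a < t := hat.lt_of_ne (by rintro rfl; exact hfa.ne hft)
  exact ⟨t, ⟨hat', hft⟩, fun u ⟨hau, hfu⟩ =>
    hmono.injOn (mem_Ici.2 hau.le) (mem_Ici.2 hat'.le) (hfu.trans hft.symm)⟩

section ImplicitFunction

variable {𝕜 E : Type*} [RCLike 𝕜] [NormedAddCommGroup E] [NormedSpace 𝕜 E] [CompleteSpace E]

theorem contDiffAt_of_eventually_unique_root {f : E × 𝕜 → 𝕜} {g : E → 𝕜} {x : E} {d : 𝕜}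
    {s : Set 𝕜} {n : WithTop ℕ∞} (hf : ContDiffAt 𝕜 n f (x, g x)) (hn : n ≠ 0)
    (hd : HasDerivAt (fun t => f (x, t)) d (g x)) (hd₀ : d ≠ 0) (hs : s ∈ 𝓝 (g x))
    (huniq : ∀ᶠ y in 𝓝 x, ∀ t ∈ s, f (y, t) = f (x, g x) → t = g y) :
    ContDiffAt 𝕜 n g x := by
  have hslice : fderiv 𝕜 f (x, g x) ∘L .inr 𝕜 E 𝕜 = (1 : 𝕜 →L[𝕜] 𝕜).smulRight d :=
    ((hf.differentiableAt hn).hasFDerivAt.comp (g x) (hasFDerivAt_prodMk_right x (g x))).unique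
      hd.hasFDerivAt
  have hinv : (fderiv 𝕜 f (x, g x) ∘L .inr 𝕜 E 𝕜).IsInvertible :=
    hslice ▸ ⟨ContinuousLinearEquiv.unitsEquivAut 𝕜 (Units.mk0 d hd₀), rfl⟩
  set ψ := hf.implicitFunction hn hinv
  have hψ : Tendsto ψ (𝓝 x) (𝓝 (g x)) := by
    simpa [ψ, hf.implicitFunction_apply_self hn hinv] using
      (hf.contDiffAt_implicitFunction hn hinv).continuousAt.tendsto
  have hψg : ψ =ᶠ[𝓝 x] g := by
    filter_upwards [huniq, hψ.eventually_mem hs, hf.eventually_apply_implicitFunction hn hinv]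
      with y hy hys hyf
    exact hy _ hys hyf
  exact (hf.contDiffAt_implicitFunction hn hinv).congr_of_eventuallyEq hψg.symm

end ImplicitFunction

section RpowExpSum

variable {ι : Type*} (s : Finset ι) (a p m z : ι → ℝ)

noncomputable def rpowExpSum (φ t : ℝ) : ℝ :=
  ∑ j ∈ s, a j * t ^ p j * exp (m j - z j * φ)

variable {s a p}

theorem rpowExpSum_zero_right (hp : ∀ j ∈ s, 0 < p j) (φ : ℝ) :
    rpowExpSum s a p m z φ 0 = 0 :=
  Finset.sum_eq_zero fun j hj => by rw [zero_rpow (hp j hj).ne', mul_zero, zero_mul]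

theorem continuous_rpowExpSum (hp : ∀ j ∈ s, 0 < p j) (φ : ℝ) :
    Continuous (rpowExpSum s a p m z φ) :=
  continuous_finsetSum _ fun j hj =>
    (continuous_const.mul (continuous_rpow_const (hp j hj).le)).mul continuous_const

theorem strictMonoOn_rpowExpSum (hs : s.Nonempty) (ha : ∀ j ∈ s, 0 < a j)
    (hp : ∀ j ∈ s, 0 < p j) (φ : ℝ) : StrictMonoOn (rpowExpSum s a p m z φ) (Ici 0) :=
  fun _ ht _ _ htu => Finset.sum_lt_sum_of_nonempty hs fun j hj =>
    mul_lt_mul_of_pos_right (mul_lt_mul_of_pos_left (rpow_lt_rpow ht htu (hp j hj)) (ha j hj))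
      (exp_pos _)

theorem tendsto_rpowExpSum_atTop (hs : s.Nonempty) (ha : ∀ j ∈ s, 0 < a j)
    (hp : ∀ j ∈ s, 0 < p j) (φ : ℝ) : Tendsto (rpowExpSum s a p m z φ) atTop atTop := by
  obtain ⟨k, hk⟩ := hs
  have hterm : Tendsto (fun t => a k * t ^ p k * exp (m k - z k * φ)) atTop atTop :=
    ((tendsto_rpow_atTop (hp k hk)).const_mul_atTop (ha k hk)).atTop_mul_const (exp_pos _)
  refine tendsto_atTop_mono' _ ?_ hterm
  filter_upwards [eventually_ge_atTop 0] with t ht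
  exact Finset.single_le_sum (f := fun j => a j * t ^ p j * exp (m j - z j * φ))
    (fun j hj => by have := ha j hj; positivity) hk

theorem existsUnique_pos_rpowExpSum_eq (hs : s.Nonempty) (ha : ∀ j ∈ s, 0 < a j)
    (hp : ∀ j ∈ s, 0 < p j) {c : ℝ} (hc : 0 < c) (φ : ℝ) :
    ∃! t, 0 < t ∧ rpowExpSum s a p m z φ t = c :=
  existsUnique_gt_apply_eq_of_strictMonoOn (continuous_rpowExpSum m z hp φ)
    (strictMonoOn_rpowExpSum m z hs ha hp φ) (by rwa [rpowExpSum_zero_right m z hp])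
    (tendsto_rpowExpSum_atTop m z hs ha hp φ)

theorem hasDerivAt_rpowExpSum {t : ℝ} (ht : t ≠ 0) (φ : ℝ) :
    HasDerivAt (rpowExpSum s a p m z φ)
      (∑ j ∈ s, a j * (p j * t ^ (p j - 1)) * exp (m j - z j * φ)) t := by
  unfold rpowExpSum
  exact HasDerivAt.fun_sum fun j _ =>
    ((hasDerivAt_rpow_const (Or.inl ht)).const_mul (a j)).mul_const _

theorem contDiffAt_rpowExpSum_uncurry {n : WithTop ℕ∞} {x : ℝ × ℝ} (hx : x.2 ≠ 0) :
    ContDiffAt ℝ n (fun y : ℝ × ℝ => rpowExpSum s a p m z y.1 y.2) x := by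
  unfold rpowExpSum
  exact ContDiffAt.sum fun j _ =>
    (contDiffAt_const.mul ((contDiffAt_rpow_const_of_ne hx).comp x contDiffAt_snd)).mul
      (contDiff_exp.contDiffAt.comp x (contDiffAt_const.sub (contDiffAt_const.mul contDiffAt_fst)))

theorem contDiff_of_rpowExpSum_eq (hs : s.Nonempty) (ha : ∀ j ∈ s, 0 < a j)
    (hp : ∀ j ∈ s, 0 < p j) {c : ℝ} {g : ℝ → ℝ} (hg₀ : ∀ φ, 0 < g φ)
    (hg : ∀ φ, rpowExpSum s a p m z φ (g φ) = c) {n : WithTop ℕ∞} : ContDiff ℝ n g := by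
  refine (contDiff_iff_contDiffAt.2 fun x => ?_).of_le (le_top : n ≤ ω)
  have hderiv_pos : 0 < ∑ j ∈ s, a j * (p j * g x ^ (p j - 1)) * exp (m j - z j * x) :=
    Finset.sum_pos (fun j hj => by
      have := ha j hj; have := hp j hj; have := rpow_pos_of_pos (hg₀ x) (p j - 1); positivity) hs
  refine contDiffAt_of_eventually_unique_root (contDiffAt_rpowExpSum_uncurry m z (hg₀ x).ne')
    (by simp) (hasDerivAt_rpowExpSum m z (hg₀ x).ne' x) hderiv_pos.ne' (Ioi_mem_nhds (hg₀ x))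
    (Eventually.of_forall fun y t ht hyt => ?_)
  exact (strictMonoOn_rpowExpSum m z hs ha hp y).injOn (mem_Ici.2 (le_of_lt ht))
    (mem_Ici.2 (hg₀ y).le) (hyt.trans ((hg x).trans (hg y).symm))

end RpowExpSum

theorem stmt7_general
    (N : ℕ)
    (z lam : ℕ → ℝ) (μtilde0 : ℝ)
    (hlam : ∀ i, i ≤ N → 0 < lam i)
    (hμt : 0 < μtilde0)
    (μbar : ℕ → ℝ)
    :
    (∀ φ : ℝ, ∃! t : ℝ, 0 < t ∧
      ∑ j ∈ Finset.range (N+1), lam j * t ^ (lam j / lam 0) * Real.exp (μbar j - z j * φ)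
        = μtilde0) ∧
    (∀ c0s : ℝ → ℝ, (∀ φ, 0 < c0s φ) →
      (∀ φ : ℝ, ∑ j ∈ Finset.range (N+1),
        lam j * (c0s φ) ^ (lam j / lam 0) * Real.exp (μbar j - z j * φ) = μtilde0) →
      (∀ n : ℕ, ContDiff ℝ n c0s) ∧
      (∀ i, 1 ≤ i → i ≤ N →
        (∀ φ : ℝ, 0 < (c0s φ) ^ (lam i / lam 0) * Real.exp (μbar i - z i * φ)) ∧
        (∀ n : ℕ, ContDiff ℝ n (fun φ : ℝ => (c0s φ) ^ (lam i / lam 0) * Real.exp (μbar i - z i * φ))))) := by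
  have hs : (Finset.range (N + 1)).Nonempty := Finset.nonempty_range_add_one
  have ha : ∀ j ∈ Finset.range (N + 1), 0 < lam j := fun j hj =>
    hlam j (Finset.mem_range_succ_iff.1 hj)
  have hp : ∀ j ∈ Finset.range (N + 1), 0 < lam j / lam 0 := fun j hj =>
    div_pos (ha j hj) (ha 0 (Finset.mem_range.2 N.succ_pos))
  refine ⟨existsUnique_pos_rpowExpSum_eq μbar z hs ha hp hμt, fun c0s hpos heq => ?_⟩
  have hsmooth : ContDiff ℝ ω c0s := contDiff_of_rpowExpSum_eq μbar z hs ha hp hpos heq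
  refine ⟨fun n => hsmooth.of_le le_top, fun i _ _ =>
    ⟨fun φ => mul_pos (rpow_pos_of_pos (hpos φ) _) (exp_pos _), fun n => ?_⟩⟩
  exact ((hsmooth.rpow_const_of_ne fun φ => (hpos φ).ne').mul
    (contDiff_const.sub (contDiff_const.mul contDiff_id)).exp).of_le le_top

theorem stmt7
    (N : ℕ) (hN : 1 ≤ N)
    (z lam μhat : ℕ → ℝ) (μtilde0 : ℝ)
    (hz0 : z 0 = 0)
    (hzne : ∀ i, 1 ≤ i → i ≤ N → z i ≠ 0)
    (hmix : ∃ i j, 1 ≤ i ∧ i ≤ N ∧ 1 ≤ j ∧ j ≤ N ∧ z i * z j < 0)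
    (hlam : ∀ i, i ≤ N → 0 < lam i)
    (hμt : 0 < μtilde0)
    (hμhat : ∀ i, i ≤ N → 0 < μhat i)
    (μbar : ℕ → ℝ) (hμbar : ∀ i, μbar i = μhat i - lam i / lam 0 * μhat 0)
    :
    (∀ φ : ℝ, ∃! t : ℝ, 0 < t ∧
      ∑ j ∈ Finset.range (N+1), lam j * t ^ (lam j / lam 0) * Real.exp (μbar j - z j * φ)
        = μtilde0) ∧
    (∀ c0s : ℝ → ℝ, (∀ φ, 0 < c0s φ) →
      (∀ φ : ℝ, ∑ j ∈ Finset.range (N+1),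
        lam j * (c0s φ) ^ (lam j / lam 0) * Real.exp (μbar j - z j * φ) = μtilde0) →
      (∀ n : ℕ, ContDiff ℝ n c0s) ∧
      (∀ i, 1 ≤ i → i ≤ N →
        (∀ φ : ℝ, 0 < (c0s φ) ^ (lam i / lam 0) * Real.exp (μbar i - z i * φ)) ∧
        (∀ n : ℕ, ContDiff ℝ n (fun φ : ℝ => (c0s φ) ^ (lam i / lam 0) * Real.exp (μbar i - z i * φ))))) :=
  stmt7_general N z lam μtilde0 hlam hμt μbar
end

section
/- For every m ∈ ℕ and all reals a < b, f_Λ converges to f^* in C^m[a,b] as Λ → ∞; that is, lim_{Λ→∞} ∑_{k=0}^m sup_{φ ∈ [a,b]} |f_Λ^{(k)}(φ) − (f^*)^{(k)}(φ)| = 0, where the superscript (k) denotes the k-th derivative. -/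
/-
As `Λ → ∞`, put `ε = Λ⁻¹`. Multiplying the equation for `c_{0,Λ}(φ)` by `ε` gives
`ε (ln c - μ̂₀) + λ₀ (∑ⱼ λⱼ c^{λⱼ/λ₀} e^{μ̄ⱼ - zⱼ φ} - μ̃₀) = 0`, which at `ε = 0` is the
equation for `c₀^*(φ)`. The left side is smooth in `(ε, φ, c)` for `c > 0` and strictly increasing
in `c` for `ε ≥ 0`, with positive `c`-derivative at `ε = 0`. The implicit function theorem
therefore gives, near each `(0, φ₀)`, a smooth `C(ε, φ)` with `C(Λ⁻¹, φ) = c_{0,Λ}(φ)` and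
`C(0, φ) = c₀^*(φ)`. Hence `∂_φ^k f_Λ(φ)` and `∂_φ^k f^*(φ)` are the values at `(Λ⁻¹, φ)` and
`(0, φ)` of one function continuous at `(0, φ₀)`: the convergence is locally uniform, hence
uniform on `[a, b]`.
-/

open Filter Real Set Topology

section

variable {𝕜 : Type*} [NontriviallyNormedField 𝕜]
  {E : Type*} [NormedAddCommGroup E] [NormedSpace 𝕜 E]
  {F : Type*} [NormedAddCommGroup F] [NormedSpace 𝕜 F]

theorem HasFDerivAt.hasDerivAt_prodMk_right {f : E × 𝕜 → F} {f' : E × 𝕜 →L[𝕜] F} {x : E} {y : 𝕜}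
    (hf : HasFDerivAt f f' (x, y)) : HasDerivAt (fun t => f (x, t)) (f' (0, 1)) y :=
  hf.comp_hasDerivAt y ((hasDerivAt_const y x).prodMk (hasDerivAt_id y))

theorem ContDiffOn.continuousOn_iteratedDeriv_snd {U : Set (E × 𝕜)} (hU : IsOpen U) :
    ∀ {k : ℕ} {f : E × 𝕜 → F}, ContDiffOn 𝕜 k f U →
      ContinuousOn (fun p : E × 𝕜 => iteratedDeriv k (fun y => f (p.1, y)) p.2) U
  | 0, f, hf => by simpa only [iteratedDeriv_zero] using hf.continuousOn
  | k + 1, f, hf => by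
    have hf' : ContDiffOn 𝕜 k (fun p => fderiv 𝕜 f p (0, 1)) U :=
      (hf.fderiv_of_isOpen hU le_rfl).clm_apply contDiffOn_const
    refine (continuousOn_iteratedDeriv_snd hU hf').congr fun p hp => ?_
    have hslice : ∀ᶠ y in 𝓝 p.2, (p.1, y) ∈ U :=
      (continuous_const.prodMk continuous_id).continuousAt.preimage_mem_nhds (hU.mem_nhds hp)
    rw [iteratedDeriv_succ']
    refine (EventuallyEq.iteratedDeriv_eq k ?_).symm
    filter_upwards [hslice] with y hy
    exact ((hf.differentiableOn (by simp) _ hy).differentiableAt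
      (hU.mem_nhds hy)).hasFDerivAt.hasDerivAt_prodMk_right.deriv.symm

theorem ContinuousLinearMap.isInvertible_of_apply_one_ne_zero {f : 𝕜 →L[𝕜] 𝕜} (hf : f 1 ≠ 0) :
    f.IsInvertible := by
  refine ⟨ContinuousLinearEquiv.unitsEquivAut 𝕜 (Units.mk0 _ hf), ?_⟩
  ext
  simp

theorem tendstoLocallyUniformly_iteratedDeriv_of_contDiffOn {ι : Type*} {l : Filter ι}
    {e : ι → E} {e₀ : E} (he : Tendsto e l (𝓝 e₀)) {f : ι → 𝕜 → F} {g : 𝕜 → F} {k : ℕ}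
    (h : ∀ x, ∃ G : E × 𝕜 → F, ∃ U ∈ 𝓝 (e₀, x), ContDiffOn 𝕜 k G U ∧
      (∀ᶠ i in l, ∀ y, (e i, y) ∈ U → f i y = G (e i, y)) ∧
      ∀ y, (e₀, y) ∈ U → g y = G (e₀, y)) :
    TendstoLocallyUniformly (fun i => iteratedDeriv k (f i)) (iteratedDeriv k g) l := by
  refine tendstoLocallyUniformly_iff_forall_tendsto.2 fun x => ?_
  obtain ⟨G, U, hU, hG, hf, hg⟩ := h x
  obtain ⟨A, B, hA, he₀, hB, hx, hAB⟩ := mem_nhds_prod_iff'.1 hU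
  set D : E × 𝕜 → F := fun q => iteratedDeriv k (fun y => G (q.1, y)) q.2
  have hD : ContinuousAt D (e₀, x) :=
    ((hG.mono hAB).continuousOn_iteratedDeriv_snd (hA.prod hB)).continuousAt
      ((hA.prod hB).mem_nhds ⟨he₀, hx⟩)
  have hfD : ∀ᶠ p in l ×ˢ 𝓝 x, iteratedDeriv k (f p.1) p.2 = D (e p.1, p.2) := by
    filter_upwards [((hf.and (he.eventually (hA.mem_nhds he₀))).prod_mk
      (hB.mem_nhds hx))] with p ⟨⟨hfp, hp⟩, hpB⟩
    refine EventuallyEq.iteratedDeriv_eq k ?_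
    filter_upwards [hB.mem_nhds hpB] with y hy using hfp y (hAB ⟨hp, hy⟩)
  have hgD : ∀ᶠ y in 𝓝 x, iteratedDeriv k g y = D (e₀, y) := by
    filter_upwards [hB.mem_nhds hx] with y hy
    refine EventuallyEq.iteratedDeriv_eq k ?_
    filter_upwards [hB.mem_nhds hy] with t ht using hg t (hAB ⟨he₀, ht⟩)
  have hlim : Tendsto (fun p : ι × 𝕜 => (D (e₀, p.2), D (e p.1, p.2))) (l ×ˢ 𝓝 x)
      (𝓝 (D (e₀, x), D (e₀, x))) :=
    (hD.tendsto.comp (tendsto_const_nhds.prodMk_nhds tendsto_snd)).prodMk_nhds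
      (hD.tendsto.comp ((he.comp tendsto_fst).prodMk_nhds tendsto_snd))
  refine (hlim.mono_right (nhds_le_uniformity _)).congr' ?_
  filter_upwards [hfD, tendsto_snd.eventually hgD] with p hp₁ hp₂
  rw [hp₁, hp₂]

end

theorem exists_contDiffOn_eq_of_injOn {𝕜 : Type*} [RCLike 𝕜]
    {E : Type*} [NormedAddCommGroup E] [NormedSpace 𝕜 E] [CompleteSpace E]
    {H : E × 𝕜 → 𝕜} {x₀ : E} {y₀ d : 𝕜} {n : ℕ} {s : Set E} {I : Set 𝕜}
    (hn : n ≠ 0) (hH : ContDiffAt 𝕜 n H (x₀, y₀)) (hH₀ : H (x₀, y₀) = 0)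
    (hd : HasDerivAt (fun y => H (x₀, y)) d y₀) (hd₀ : d ≠ 0) (hI : I ∈ 𝓝 y₀)
    (hinj : ∀ x ∈ s, InjOn (fun y => H (x, y)) I) :
    ∃ C : E → 𝕜, ∃ U ∈ 𝓝 x₀, ContDiffOn 𝕜 n C U ∧
      ∀ x ∈ U, C x ∈ I ∧ (x ∈ s → ∀ y ∈ I, H (x, y) = 0 → C x = y) := by
  have pn : (n : WithTop ℕ∞) ≠ 0 := by exact_mod_cast hn
  have if₂ : (fderiv 𝕜 H (x₀, y₀) ∘L .inr 𝕜 E 𝕜).IsInvertible := by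
    refine ContinuousLinearMap.isInvertible_of_apply_one_ne_zero ?_
    rwa [hd.unique (hH.differentiableAt pn).hasFDerivAt.hasDerivAt_prodMk_right] at hd₀
  set C := hH.implicitFunction pn if₂
  have hC : ContDiffAt 𝕜 n C x₀ := hH.contDiffAt_implicitFunction pn if₂
  obtain ⟨u, hu, hCu⟩ := hC.contDiffOn le_rfl (by simp)
  have hCI : ∀ᶠ x in 𝓝 x₀, C x ∈ I := by
    refine hC.continuousAt.preimage_mem_nhds ?_
    rwa [show C x₀ = y₀ from hH.implicitFunction_apply_self pn if₂]
  refine ⟨C, _, inter_mem hu (hCI.and (hH.eventually_apply_implicitFunction pn if₂)),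
    hCu.mono inter_subset_left, fun x ⟨_, hxI, hx₀⟩ => ⟨hxI, fun hs y hy hHy => ?_⟩⟩
  exact hinj x hs hxI hy (hx₀.trans (hH₀.trans hHy.symm))

theorem TendstoUniformlyOn.tendsto_iSup_dist {α β ι : Type*} [PseudoMetricSpace β] {l : Filter ι}
    {F : ι → α → β} {f : α → β} {K : Set α} (h : TendstoUniformlyOn F f l K) :
    Tendsto (fun i => ⨆ x : K, dist (F i x) (f x)) l (𝓝 0) := by
  refine Metric.tendsto_nhds.2 fun ε hε => ?_
  filter_upwards [Metric.tendstoUniformlyOn_iff.1 h (ε / 2) (half_pos hε)] with i hi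
  have hle : ⨆ x : K, dist (F i x) (f x) ≤ ε / 2 :=
    Real.iSup_le (fun x => by rw [dist_comm]; exact (hi x x.2).le) (half_pos hε).le
  rw [Real.dist_eq, sub_zero, abs_of_nonneg (Real.iSup_nonneg fun _ => dist_nonneg)]
  linarith

section Model

variable (N : ℕ) (z lam μbar : ℕ → ℝ)

noncomputable def occupiedVolume (φ c : ℝ) : ℝ :=
  ∑ j ∈ Finset.range (N + 1), lam j * c ^ (lam j / lam 0) * exp (μbar j - z j * φ)

noncomputable def chargeDensity (φ c : ℝ) : ℝ :=
  ∑ i ∈ Finset.Icc 1 N, z i * (c ^ (lam i / lam 0) * exp (μbar i - z i * φ))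

noncomputable def scaledResidual (μhat₀ μtilde₀ : ℝ) (p : (ℝ × ℝ) × ℝ) : ℝ :=
  p.1.1 * (log p.2 - μhat₀) + lam 0 * (occupiedVolume N z lam μbar p.1.2 p.2 - μtilde₀)

variable {N z lam μbar}

theorem ContDiffAt.occupiedVolume {E : Type*} [NormedAddCommGroup E] [NormedSpace ℝ E]
    {φ c : E → ℝ} {x : E} {n : ℕ} (hφ : ContDiffAt ℝ n φ x) (hc : ContDiffAt ℝ n c x)
    (hcx : 0 < c x) :
    ContDiffAt ℝ n (fun y => occupiedVolume N z lam μbar (φ y) (c y)) x :=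
  ContDiffAt.sum fun _ _ => (contDiffAt_const.mul (hc.rpow_const_of_ne hcx.ne')).mul
    (contDiffAt_const.sub (contDiffAt_const.mul hφ)).exp

theorem ContDiffOn.chargeDensity {E : Type*} [NormedAddCommGroup E] [NormedSpace ℝ E]
    {φ c : E → ℝ} {s : Set E} {n : ℕ} (hφ : ContDiffOn ℝ n φ s) (hc : ContDiffOn ℝ n c s)
    (hcs : ∀ x ∈ s, 0 < c x) :
    ContDiffOn ℝ n (fun y => chargeDensity N z lam μbar (φ y) (c y)) s :=
  ContDiffOn.sum fun _ _ => contDiffOn_const.mul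
    ((hc.rpow_const_of_ne fun x hx => (hcs x hx).ne').mul
      (contDiffOn_const.sub (contDiffOn_const.mul hφ)).exp)

theorem contDiffAt_scaledResidual {μhat₀ μtilde₀ : ℝ} {p : (ℝ × ℝ) × ℝ} {n : ℕ} (hp : 0 < p.2) :
    ContDiffAt ℝ n (scaledResidual N z lam μbar μhat₀ μtilde₀) p :=
  (contDiffAt_fst.fst.mul ((contDiffAt_snd.log hp.ne').sub contDiffAt_const)).add
    (contDiffAt_const.mul
      ((contDiffAt_fst.snd.occupiedVolume contDiffAt_snd hp).sub contDiffAt_const))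

theorem strictMonoOn_occupiedVolume (hlam : ∀ j ≤ N, 0 < lam j) (φ : ℝ) :
    StrictMonoOn (occupiedVolume N z lam μbar φ) (Ioi 0) := fun c₁ hc₁ c₂ _ hlt =>
  Finset.sum_lt_sum_of_nonempty Finset.nonempty_range_add_one fun j hj => by
    have hjN : j ≤ N := Nat.lt_succ_iff.mp (Finset.mem_range.mp hj)
    have := hlam j hjN
    have := hlam 0 N.zero_le
    gcongr
    exact le_of_lt hc₁

theorem exists_pos_hasDerivAt_occupiedVolume (hlam : ∀ j ≤ N, 0 < lam j) (φ : ℝ) {c : ℝ}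
    (hc : 0 < c) : ∃ d, 0 < d ∧ HasDerivAt (occupiedVolume N z lam μbar φ) d c := by
  refine ⟨_, Finset.sum_pos (fun j hj => ?_) Finset.nonempty_range_add_one,
    HasDerivAt.fun_sum fun j _ =>
      ((Real.hasDerivAt_rpow_const (Or.inl hc.ne')).const_mul (lam j)).mul_const _⟩
  have hjN : j ≤ N := Nat.lt_succ_iff.mp (Finset.mem_range.mp hj)
  have := hlam j hjN
  have := hlam 0 N.zero_le
  positivity

theorem strictMonoOn_scaledResidual (hlam : ∀ j ≤ N, 0 < lam j) (μhat₀ μtilde₀ : ℝ) {ε : ℝ}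
    (hε : 0 ≤ ε) (φ : ℝ) :
    StrictMonoOn (fun c => scaledResidual N z lam μbar μhat₀ μtilde₀ ((ε, φ), c)) (Ioi 0) :=
  fun c₁ hc₁ c₂ hc₂ hlt => by
    have hlog : log c₁ ≤ log c₂ := log_le_log hc₁ hlt.le
    have hvol := strictMonoOn_occupiedVolume (z := z) (μbar := μbar) hlam φ hc₁ hc₂ hlt
    simp only [scaledResidual]
    exact add_lt_add_of_le_of_lt (mul_le_mul_of_nonneg_left (by linarith) hε)
      (mul_lt_mul_of_pos_left (by linarith) (hlam 0 N.zero_le))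

theorem exists_contDiffOn_chargeDensity_extension {μhat₀ μtilde₀ : ℝ} {c₀ : ℝ → ℝ → ℝ}
    {c₀s : ℝ → ℝ} (hlam : ∀ j ≤ N, 0 < lam j) (hc₀pos : ∀ Λ : ℝ, 0 < Λ → ∀ φ, 0 < c₀ Λ φ)
    (hc₀eq : ∀ Λ : ℝ, 0 < Λ → ∀ φ,
      log (c₀ Λ φ) + Λ * lam 0 * occupiedVolume N z lam μbar φ (c₀ Λ φ)
        = Λ * lam 0 * μtilde₀ + μhat₀)
    (hc₀spos : ∀ φ, 0 < c₀s φ) (hc₀seq : ∀ φ, occupiedVolume N z lam μbar φ (c₀s φ) = μtilde₀)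
    (k : ℕ) (φ₀ : ℝ) :
    ∃ G : ℝ × ℝ → ℝ, ∃ U ∈ 𝓝 ((0 : ℝ), φ₀), ContDiffOn ℝ k G U ∧
      (∀ᶠ Λ in atTop, ∀ φ, (Λ⁻¹, φ) ∈ U →
        chargeDensity N z lam μbar φ (c₀ Λ φ) = G (Λ⁻¹, φ)) ∧
      ∀ φ, ((0 : ℝ), φ) ∈ U → chargeDensity N z lam μbar φ (c₀s φ) = G (0, φ) := by
  set H := scaledResidual N z lam μbar μhat₀ μtilde₀
  have hH₀ : ∀ φ, H ((0, φ), c₀s φ) = 0 := fun φ => by simp [H, scaledResidual, hc₀seq]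
  have hHΛ : ∀ Λ : ℝ, 0 < Λ → ∀ φ, H ((Λ⁻¹, φ), c₀ Λ φ) = 0 := fun Λ hΛ φ => by
    have := hc₀eq Λ hΛ φ
    simp only [H, scaledResidual]
    field_simp
    linarith
  obtain ⟨d, hd, hder⟩ := exists_pos_hasDerivAt_occupiedVolume (z := z) (μbar := μbar) hlam φ₀
    (hc₀spos φ₀)
  have hHder : HasDerivAt (fun c => H ((0, φ₀), c)) (lam 0 * d) (c₀s φ₀) := by
    simpa [H, scaledResidual] using (hder.sub_const μtilde₀).const_mul (lam 0)
  obtain ⟨C, U, hU, hC, hCU⟩ := exists_contDiffOn_eq_of_injOn (n := k + 1) (s := {x | 0 ≤ x.1})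
    k.succ_ne_zero (contDiffAt_scaledResidual (hc₀spos φ₀)) (hH₀ φ₀) hHder
    (mul_pos (hlam 0 N.zero_le) hd).ne' (Ioi_mem_nhds (hc₀spos φ₀))
    fun x hx => (strictMonoOn_scaledResidual hlam μhat₀ μtilde₀ hx x.2).injOn
  refine ⟨fun q => chargeDensity N z lam μbar q.2 (C q), U, hU,
    contDiffOn_snd.chargeDensity hC.of_succ fun q hq => (hCU q hq).1, ?_,
    fun φ hφ => congrArg _ ((hCU _ hφ).2 (le_refl (0 : ℝ)) _ (hc₀spos φ) (hH₀ φ)).symm⟩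
  filter_upwards [eventually_gt_atTop 0] with Λ hΛ φ hφ
  exact congrArg _ ((hCU _ hφ).2 (inv_nonneg.2 hΛ.le) _ (hc₀pos Λ hΛ φ) (hHΛ Λ hΛ φ)).symm

end Model

theorem stmt9_general
    (N : ℕ)
    (z lam μhat : ℕ → ℝ) (μtilde0 : ℝ)
    (hlam : ∀ i, i ≤ N → 0 < lam i)
    (μbar : ℕ → ℝ)
    (c0 : ℝ → ℝ → ℝ)
    (hc0pos : ∀ Λ : ℝ, 0 < Λ → ∀ φ, 0 < c0 Λ φ)
    (hc0eq : ∀ Λ : ℝ, 0 < Λ → ∀ φ : ℝ, Real.log (c0 Λ φ)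
        + Λ * lam 0 * ∑ j ∈ Finset.range (N+1),
            lam j * (c0 Λ φ) ^ (lam j / lam 0) * Real.exp (μbar j - z j * φ)
      = Λ * lam 0 * μtilde0 + μhat 0)
    (c0s : ℝ → ℝ) (hc0spos : ∀ φ, 0 < c0s φ)
    (hc0seq : ∀ φ : ℝ, ∑ j ∈ Finset.range (N+1),
        lam j * (c0s φ) ^ (lam j / lam 0) * Real.exp (μbar j - z j * φ) = μtilde0)
    :
    ∀ m : ℕ, ∀ a b : ℝ, a < b →
      Filter.Tendsto (fun Λ : ℝ => ∑ k ∈ Finset.range (m+1),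
          ⨆ φ : Set.Icc a b,
            |iteratedDeriv k (fun ψ : ℝ => ∑ i ∈ Finset.Icc 1 N, z i * (((c0 Λ) ψ) ^ (lam i / lam 0) * Real.exp (μbar i - z i * ψ))) ↑φ
              - iteratedDeriv k (fun ψ : ℝ => ∑ i ∈ Finset.Icc 1 N, z i * ((c0s ψ) ^ (lam i / lam 0) * Real.exp (μbar i - z i * ψ))) ↑φ|)
        Filter.atTop (nhds 0) := by
  intro m a b _
  have hunif : ∀ k, TendstoUniformlyOn
      (fun Λ => iteratedDeriv k fun ψ => chargeDensity N z lam μbar ψ (c0 Λ ψ))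
      (iteratedDeriv k fun ψ => chargeDensity N z lam μbar ψ (c0s ψ)) atTop (Icc a b) :=
    fun k => tendstoLocallyUniformly_iff_forall_isCompact.1
      (tendstoLocallyUniformly_iteratedDeriv_of_contDiffOn tendsto_inv_atTop_zero
        (exists_contDiffOn_chargeDensity_extension hlam hc0pos hc0eq hc0spos hc0seq k))
      _ isCompact_Icc
  have hsum := tendsto_finsetSum (Finset.range (m + 1)) fun k _ => (hunif k).tendsto_iSup_dist
  simp only [Finset.sum_const_zero, Real.dist_eq] at hsum
  exact hsum

theorem stmt9
    (N : ℕ) (hN : 1 ≤ N)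
    (z lam μhat : ℕ → ℝ) (μtilde0 : ℝ)
    (hz0 : z 0 = 0)
    (hzne : ∀ i, 1 ≤ i → i ≤ N → z i ≠ 0)
    (hmix : ∃ i j, 1 ≤ i ∧ i ≤ N ∧ 1 ≤ j ∧ j ≤ N ∧ z i * z j < 0)
    (hlam : ∀ i, i ≤ N → 0 < lam i)
    (hμt : 0 < μtilde0)
    (hμhat : ∀ i, i ≤ N → 0 < μhat i)
    (μbar : ℕ → ℝ) (hμbar : ∀ i, μbar i = μhat i - lam i / lam 0 * μhat 0)
    (c0 : ℝ → ℝ → ℝ)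
    (hc0pos : ∀ Λ : ℝ, 0 < Λ → ∀ φ, 0 < c0 Λ φ)
    (hc0eq : ∀ Λ : ℝ, 0 < Λ → ∀ φ : ℝ, Real.log (c0 Λ φ)
        + Λ * lam 0 * ∑ j ∈ Finset.range (N+1),
            lam j * (c0 Λ φ) ^ (lam j / lam 0) * Real.exp (μbar j - z j * φ)
      = Λ * lam 0 * μtilde0 + μhat 0)
    (c0s : ℝ → ℝ) (hc0spos : ∀ φ, 0 < c0s φ)
    (hc0seq : ∀ φ : ℝ, ∑ j ∈ Finset.range (N+1),
        lam j * (c0s φ) ^ (lam j / lam 0) * Real.exp (μbar j - z j * φ) = μtilde0)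
    :
    ∀ m : ℕ, ∀ a b : ℝ, a < b →
      Filter.Tendsto (fun Λ : ℝ => ∑ k ∈ Finset.range (m+1),
          ⨆ φ : Set.Icc a b,
            |iteratedDeriv k (fun ψ : ℝ => ∑ i ∈ Finset.Icc 1 N, z i * (((c0 Λ) ψ) ^ (lam i / lam 0) * Real.exp (μbar i - z i * ψ))) ↑φ
              - iteratedDeriv k (fun ψ : ℝ => ∑ i ∈ Finset.Icc 1 N, z i * ((c0s ψ) ^ (lam i / lam 0) * Real.exp (μbar i - z i * ψ))) ↑φ|)
        Filter.atTop (nhds 0) :=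
  stmt9_general N z lam μhat μtilde0 hlam μbar c0 hc0pos hc0eq c0s hc0spos hc0seq
end

section
/- The function f^*(φ) = ∑_{i=1}^N z_i c_i^*(φ) is strictly decreasing on ℝ. -/
/-!
Fix φ₁ < φ₂, put δ = φ₂ - φ₁ and v = log (c₀*(φ₂) / c₀*(φ₁)) / λ₀. Then
c_j*(φ₂) = c_j*(φ₁) e^{s_j} with s_j = λ_j v - z_j δ for every j = 0, …, N, and the
defining equation of c₀* at φ₁ and φ₂ gives ∑ λ_j c_j*(φ₁) (e^{s_j} - 1) = 0. Since z_j δ = λ_j v - s_j,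

  δ (f*(φ₂) - f*(φ₁)) = v ∑ λ_j c_j* (e^{s_j} - 1) - ∑ c_j* s_j (e^{s_j} - 1) = - ∑ c_j* s_j (e^{s_j} - 1),

which is negative because s (e^s - 1) > 0 for s ≠ 0, and the s_j cannot all vanish: that would force
every z_j to have the sign of v, against the presence of valences of both signs.
-/

open Real

lemma mul_exp_sub_one_pos {s : ℝ} (hs : s ≠ 0) : 0 < s * (exp s - 1) := by
  rcases hs.lt_or_gt with hneg | hpos
  · exact mul_pos_of_neg_of_neg hneg (sub_neg.2 (exp_lt_one_iff.2 hneg))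
  · exact mul_pos hpos (sub_pos.2 (one_lt_exp_iff.2 hpos))

lemma mul_exp_sub_one_nonneg (s : ℝ) : 0 ≤ s * (exp s - 1) := by
  rcases eq_or_ne s 0 with rfl | hs
  · simp
  · exact (mul_exp_sub_one_pos hs).le

lemma Finset.sum_Icc_one_eq_sum_range_succ {M : Type*} [AddCommMonoid M] {g : ℕ → M}
    (hg : g 0 = 0) (n : ℕ) : ∑ i ∈ Finset.Icc 1 n, g i = ∑ i ∈ Finset.range (n + 1), g i := by
  refine Finset.sum_subset (fun i hi => ?_) (fun i hr hi => ?_)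
  · simp only [Finset.mem_Icc] at hi
    exact Finset.mem_range.2 (by omega)
  · obtain rfl : i = 0 := by
      simp only [Finset.mem_range, Finset.mem_Icc, not_and, not_le] at hr hi
      omega
    exact hg

lemma rpow_mul_exp_eq_mul_exp {c₁ c₂ : ℝ} (h₁ : 0 < c₁) (h₂ : 0 < c₂) (p m z a b : ℝ) :
    c₂ ^ p * exp (m - z * b) =
      c₁ ^ p * exp (m - z * a) * exp (p * log (c₂ / c₁) - z * (b - a)) := by
  have hc₂ : c₂ = c₁ * (c₂ / c₁) := by field_simp
  rw [hc₂, mul_rpow h₁.le (div_pos h₂ h₁).le, rpow_def_of_pos (div_pos h₂ h₁), ← hc₂]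
  rw [mul_assoc, mul_assoc, ← exp_add, ← exp_add]
  ring_nf

theorem sum_mul_mul_exp_sub_one_neg {ι : Type*} {s : Finset ι} {l w z : ι → ℝ} {v δ : ℝ}
    (hδ : 0 < δ) (hl : ∀ j ∈ s, 0 < l j) (hw : ∀ j ∈ s, 0 < w j)
    (hmix : ∃ i ∈ s, ∃ j ∈ s, z i * z j < 0)
    (hbal : ∑ j ∈ s, l j * w j * (exp (l j * v - z j * δ) - 1) = 0) :
    ∑ j ∈ s, z j * w j * (exp (l j * v - z j * δ) - 1) < 0 := by
  have hne : ∃ j ∈ s, l j * v - z j * δ ≠ 0 := by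
    obtain ⟨i, hi, j, hj, hij⟩ := hmix
    by_contra! h
    have hi0 := h i hi
    have hj0 := h j hj
    have : 0 ≤ (z i * δ) * (z j * δ) := by
      rw [← sub_eq_zero.1 hi0, ← sub_eq_zero.1 hj0]
      nlinarith [mul_pos (hl i hi) (hl j hj), sq_nonneg v]
    nlinarith [mul_pos hδ hδ]
  have hpos : 0 < ∑ j ∈ s, w j * ((l j * v - z j * δ) * (exp (l j * v - z j * δ) - 1)) := by
    refine Finset.sum_pos' (fun j hj => mul_nonneg (hw j hj).le (mul_exp_sub_one_nonneg _)) ?_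
    obtain ⟨j, hj, hj0⟩ := hne
    exact ⟨j, hj, mul_pos (hw j hj) (mul_exp_sub_one_pos hj0)⟩
  have hsplit : δ * ∑ j ∈ s, z j * w j * (exp (l j * v - z j * δ) - 1) =
      v * ∑ j ∈ s, l j * w j * (exp (l j * v - z j * δ) - 1) -
        ∑ j ∈ s, w j * ((l j * v - z j * δ) * (exp (l j * v - z j * δ) - 1)) := by
    simp only [Finset.mul_sum, ← Finset.sum_sub_distrib]
    exact Finset.sum_congr rfl fun j _ => by ring
  refine neg_of_mul_neg_right ?_ hδ.le
  rw [hsplit, hbal]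
  linarith

theorem stmt10_general
    (N : ℕ)
    (z lam : ℕ → ℝ) (μtilde0 : ℝ)
    (hz0 : z 0 = 0)
    (hmix : ∃ i j, 1 ≤ i ∧ i ≤ N ∧ 1 ≤ j ∧ j ≤ N ∧ z i * z j < 0)
    (hlam : ∀ i, i ≤ N → 0 < lam i)
    (μbar : ℕ → ℝ)
    (c0s : ℝ → ℝ) (hc0spos : ∀ φ, 0 < c0s φ)
    (hc0seq : ∀ φ : ℝ, ∑ j ∈ Finset.range (N+1),
        lam j * (c0s φ) ^ (lam j / lam 0) * Real.exp (μbar j - z j * φ) = μtilde0)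
    :
    StrictAnti (fun φ : ℝ => ∑ i ∈ Finset.Icc 1 N, z i * ((c0s φ) ^ (lam i / lam 0) * Real.exp (μbar i - z i * φ))) := by
  intro a b hab
  set w : ℕ → ℝ := fun j => c0s a ^ (lam j / lam 0) * exp (μbar j - z j * a)
  set v := log (c0s b / c0s a) / lam 0
  have hshift : ∀ j, c0s b ^ (lam j / lam 0) * exp (μbar j - z j * b) =
      w j * exp (lam j * v - z j * (b - a)) := fun j => by
    rw [rpow_mul_exp_eq_mul_exp (hc0spos a) (hc0spos b) _ _ _ a b, div_mul_comm,
      mul_comm _ (lam j)]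
  have hbal :
      ∑ j ∈ Finset.range (N + 1), lam j * w j * (exp (lam j * v - z j * (b - a)) - 1) = 0 := by
    rw [← sub_self μtilde0]
    nth_rw 1 [← hc0seq b, ← hc0seq a]
    rw [← Finset.sum_sub_distrib]
    exact Finset.sum_congr rfl fun j _ => by rw [mul_assoc _ (c0s b ^ _), hshift]; ring
  rw [← sub_neg, ← Finset.sum_sub_distrib, Finset.sum_Icc_one_eq_sum_range_succ (by simp [hz0])]
  calc _ = ∑ j ∈ Finset.range (N + 1), z j * w j * (exp (lam j * v - z j * (b - a)) - 1) :=
        Finset.sum_congr rfl fun j _ => by rw [hshift]; ring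
    _ < 0 := by
      obtain ⟨i, j, -, hi, -, hj, hij⟩ := hmix
      exact sum_mul_mul_exp_sub_one_neg (sub_pos.2 hab)
        (fun j hj => hlam j (Finset.mem_range_succ_iff.1 hj))
        (fun j _ => mul_pos (rpow_pos_of_pos (hc0spos a) _) (exp_pos _))
        ⟨i, Finset.mem_range.2 (by omega), j, Finset.mem_range.2 (by omega), hij⟩ hbal

theorem stmt10
    (N : ℕ) (hN : 1 ≤ N)
    (z lam μhat : ℕ → ℝ) (μtilde0 : ℝ)
    (hz0 : z 0 = 0)
    (hzne : ∀ i, 1 ≤ i → i ≤ N → z i ≠ 0)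
    (hmix : ∃ i j, 1 ≤ i ∧ i ≤ N ∧ 1 ≤ j ∧ j ≤ N ∧ z i * z j < 0)
    (hlam : ∀ i, i ≤ N → 0 < lam i)
    (hμt : 0 < μtilde0)
    (hμhat : ∀ i, i ≤ N → 0 < μhat i)
    (μbar : ℕ → ℝ) (hμbar : ∀ i, μbar i = μhat i - lam i / lam 0 * μhat 0)
    (c0s : ℝ → ℝ) (hc0spos : ∀ φ, 0 < c0s φ)
    (hc0seq : ∀ φ : ℝ, ∑ j ∈ Finset.range (N+1),
        lam j * (c0s φ) ^ (lam j / lam 0) * Real.exp (μbar j - z j * φ) = μtilde0)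
    :
    StrictAnti (fun φ : ℝ => ∑ i ∈ Finset.Icc 1 N, z i * ((c0s φ) ^ (lam i / lam 0) * Real.exp (μbar i - z i * φ))) :=
  stmt10_general N z lam μtilde0 hz0 hmix hlam μbar c0s hc0spos hc0seq
end

section
/- For every φ ∈ ℝ, the derivative of c_0^* satisfies (c_0^*)'(φ) = λ_0 c_0^*(φ) · (∑_{i=1}^N z_i λ_i c_i^*(φ)) / (∑_{i=0}^N λ_i^2 c_i^*(φ)). -/
/-!
Write `t = log c₀*`. The defining relation becomes `F (φ, t) = μ̃₀` for the exponential sum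
`F (φ, t) = ∑ⱼ λⱼ exp ((λⱼ / λ₀) t - zⱼ φ + μ̄ⱼ)`, which is smooth and strictly increasing in `t`.
Implicit differentiation gives `t' = -∂_φ F / ∂_t F = (∑ⱼ λⱼ zⱼ cⱼ*) / (∑ⱼ λⱼ (λⱼ / λ₀) cⱼ*)`,
and `(c₀*)' = c₀* t'`; the `j = 0` term of the numerator vanishes since `z₀ = 0`.
-/

open Real Topology

theorem ContinuousLinearMap.isInvertible_of_apply_one_ne_zero_s12 {𝕜 : Type*} [NormedField 𝕜]
    {L : 𝕜 →L[𝕜] 𝕜} (hL : L 1 ≠ 0) : L.IsInvertible :=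
  ⟨ContinuousLinearEquiv.unitsEquivAut 𝕜 (Units.mk0 _ hL), by ext; simp⟩

theorem HasStrictFDerivAt.hasDerivAt_of_eventually_apply_eq {𝕜 : Type*}
    [NontriviallyNormedField 𝕜] [CompleteSpace 𝕜] {F : 𝕜 × 𝕜 → 𝕜} {F' : 𝕜 × 𝕜 →L[𝕜] 𝕜}
    {g : 𝕜 → 𝕜} {a : 𝕜} (hF : HasStrictFDerivAt F F' (a, g a)) (hF' : F' (0, 1) ≠ 0)
    (hg : ∀ᶠ x in 𝓝 a, F (x, g x) = F (a, g a))
    (hinj : ∀ᶠ x in 𝓝 a, Function.Injective fun y => F (x, y)) :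
    HasDerivAt g (-F' (1, 0) / F' (0, 1)) a := by
  have hinv : (F' ∘L .inr 𝕜 𝕜 𝕜).IsInvertible :=
    ContinuousLinearMap.isInvertible_of_apply_one_ne_zero_s12 (by simpa using hF')
  have hderiv :
      (-(F' ∘L .inr 𝕜 𝕜 𝕜).inverse ∘L (F' ∘L .inl 𝕜 𝕜 𝕜)) 1 = -F' (1, 0) / F' (0, 1) := by
    rw [neg_apply, neg_div, neg_inj, ContinuousLinearMap.comp_apply, hinv.inverse_apply_eq]
    have hlin : ∀ r, F' (0, r) = r * F' (0, 1) := fun r => by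
      rw [← smul_eq_mul, ← F'.map_smul, Prod.smul_mk, smul_zero, smul_eq_mul, mul_one]
    simp only [ContinuousLinearMap.comp_apply, ContinuousLinearMap.inl_apply,
      ContinuousLinearMap.inr_apply]
    rw [hlin, div_mul_cancel₀ _ hF']
  have hψ := (hF.hasStrictFDerivAt_implicitFunctionOfProdDomain hinv).hasFDerivAt.hasDerivAt
  rw [hderiv] at hψ
  have hψg : hF.implicitFunctionOfProdDomain hinv =ᶠ[𝓝 a] g := by
    filter_upwards [hF.eventually_apply_implicitFunctionOfProdDomain hinv, hg, hinj]
      with x hψx hgx hx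
    exact hx (hψx.trans hgx.symm)
  exact hψ.congr_of_eventuallyEq hψg.symm

theorem hasStrictFDerivAt_sum_mul_exp {ι : Type*} (s : Finset ι) (a b d m : ι → ℝ) (p : ℝ × ℝ) :
    HasStrictFDerivAt (fun q : ℝ × ℝ => ∑ j ∈ s, a j * exp (b j * q.2 - d j * q.1 + m j))
      (∑ j ∈ s, (a j * exp (b j * p.2 - d j * p.1 + m j)) •
        (b j • ContinuousLinearMap.snd ℝ ℝ ℝ - d j • ContinuousLinearMap.fst ℝ ℝ ℝ)) p := by
  refine .fun_sum fun j _ => ?_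
  have hlin : HasStrictFDerivAt (fun q : ℝ × ℝ => b j * q.2 - d j * q.1 + m j)
      (b j • ContinuousLinearMap.snd ℝ ℝ ℝ - d j • ContinuousLinearMap.fst ℝ ℝ ℝ) p :=
    (b j • ContinuousLinearMap.snd ℝ ℝ ℝ - d j • ContinuousLinearMap.fst ℝ ℝ ℝ)
      |>.hasStrictFDerivAt.add_const (m j)
  simpa only [smul_smul] using hlin.exp.const_mul (a j)

theorem strictMono_sum_mul_exp {ι : Type*} {s : Finset ι} (hs : s.Nonempty) {a b : ι → ℝ}
    (ha : ∀ j ∈ s, 0 < a j) (hb : ∀ j ∈ s, 0 < b j) (d m : ι → ℝ) (x : ℝ) :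
    StrictMono fun t => ∑ j ∈ s, a j * exp (b j * t - d j * x + m j) := fun t u htu =>
  Finset.sum_lt_sum_of_nonempty hs fun j hj =>
    mul_lt_mul_of_pos_left (exp_lt_exp.2 (by nlinarith [hb j hj])) (ha j hj)

theorem hasDerivAt_of_sum_mul_rpow_mul_exp_eq {ι : Type*} {s : Finset ι} (hs : s.Nonempty)
    {a b : ι → ℝ} (ha : ∀ j ∈ s, 0 < a j) (hb : ∀ j ∈ s, 0 < b j) (d m : ι → ℝ) {c : ℝ → ℝ}
    (hc : ∀ φ, 0 < c φ) {μ : ℝ} (hμ : ∀ φ, ∑ j ∈ s, a j * c φ ^ b j * exp (m j - d j * φ) = μ)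
    (φ₀ : ℝ) :
    HasDerivAt c (c φ₀ * ((∑ j ∈ s, a j * (c φ₀ ^ b j * exp (m j - d j * φ₀)) * d j) /
      ∑ j ∈ s, a j * (c φ₀ ^ b j * exp (m j - d j * φ₀)) * b j)) φ₀ := by
  have hlog_exp : ∀ φ j,
      c φ ^ b j * exp (m j - d j * φ) = exp (b j * log (c φ) - d j * φ + m j) := fun φ j => by
    rw [rpow_def_of_pos (hc φ), ← exp_add]
    ring_nf
  set F := fun q : ℝ × ℝ => ∑ j ∈ s, a j * exp (b j * q.2 - d j * q.1 + m j)
  have hF : ∀ φ, F (φ, log (c φ)) = μ := fun φ => by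
    rw [← hμ φ]
    exact Finset.sum_congr rfl fun j _ => by rw [mul_assoc, hlog_exp]
  set w := fun j => c φ₀ ^ b j * exp (m j - d j * φ₀)
  obtain ⟨F', hF', hF'₁, hF'₂⟩ : ∃ F', HasStrictFDerivAt F F' (φ₀, log (c φ₀)) ∧
      F' (1, 0) = -∑ j ∈ s, a j * w j * d j ∧ F' (0, 1) = ∑ j ∈ s, a j * w j * b j :=
    ⟨_, hasStrictFDerivAt_sum_mul_exp s a b d m _, by simp [w, hlog_exp], by simp [w, hlog_exp]⟩
  have hF'₂_pos : 0 < F' (0, 1) := by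
    rw [hF'₂]
    refine Finset.sum_pos (fun j hj => ?_) hs
    have hw : 0 < w j := mul_pos (rpow_pos_of_pos (hc φ₀) _) (exp_pos _)
    exact mul_pos (mul_pos (ha j hj) hw) (hb j hj)
  have hlog := hF'.hasDerivAt_of_eventually_apply_eq hF'₂_pos.ne'
    (.of_forall fun φ => (hF φ).trans (hF φ₀).symm)
    (.of_forall fun φ => (strictMono_sum_mul_exp hs ha hb d m φ).injective)
  rw [hF'₁, hF'₂, neg_neg] at hlog
  simpa only [exp_log (hc _)] using hlog.exp

theorem stmt12_general
    (N : ℕ)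
    (z lam : ℕ → ℝ) (μtilde0 : ℝ)
    (hz0 : z 0 = 0)
    (hlam : ∀ i, i ≤ N → 0 < lam i)
    (μbar : ℕ → ℝ)
    (c0s : ℝ → ℝ) (hc0spos : ∀ φ, 0 < c0s φ)
    (hc0seq : ∀ φ : ℝ, ∑ j ∈ Finset.range (N+1),
        lam j * (c0s φ) ^ (lam j / lam 0) * Real.exp (μbar j - z j * φ) = μtilde0)
    :
    ∀ φ : ℝ, deriv c0s φ = lam 0 * c0s φ * (∑ i ∈ Finset.Icc 1 N, z i * lam i * ((c0s φ) ^ (lam i / lam 0) * Real.exp (μbar i - z i * φ))) / (∑ i ∈ Finset.range (N+1), lam i ^ 2 * ((c0s φ) ^ (lam i / lam 0) * Real.exp (μbar i - z i * φ))) := by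
  intro φ
  have hlam' : ∀ j ∈ Finset.range (N + 1), 0 < lam j :=
    fun j hj => hlam j (Finset.mem_range_succ_iff.1 hj)
  have hlam0 : 0 < lam 0 := hlam 0 N.zero_le
  rw [(hasDerivAt_of_sum_mul_rpow_mul_exp_eq ⟨0, by simp⟩ hlam'
    (fun j hj => div_pos (hlam' j hj) hlam0) z μbar hc0spos hc0seq φ).deriv]
  obtain ⟨w, hw⟩ : ∃ w : ℕ → ℝ, ∀ j, c0s φ ^ (lam j / lam 0) * exp (μbar j - z j * φ) = w j :=
    ⟨_, fun _ => rfl⟩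
  simp only [hw]
  have hnum : ∑ i ∈ Finset.Icc 1 N, z i * lam i * w i =
      ∑ j ∈ Finset.range (N + 1), lam j * w j * z j := by
    have hIcc : Finset.Icc 1 N = (Finset.range (N + 1)).erase 0 := by ext; simp; omega
    rw [hIcc, Finset.sum_erase _ (by simp [hz0])]
    exact Finset.sum_congr rfl fun j _ => by ring
  have hden : ∑ i ∈ Finset.range (N + 1), lam i ^ 2 * w i =
      lam 0 * ∑ j ∈ Finset.range (N + 1), lam j * w j * (lam j / lam 0) := by
    rw [Finset.mul_sum]
    exact Finset.sum_congr rfl fun j _ => by field_simp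
  rw [hnum, hden]
  field_simp

theorem stmt12
    (N : ℕ) (hN : 1 ≤ N)
    (z lam μhat : ℕ → ℝ) (μtilde0 : ℝ)
    (hz0 : z 0 = 0)
    (hzne : ∀ i, 1 ≤ i → i ≤ N → z i ≠ 0)
    (hmix : ∃ i j, 1 ≤ i ∧ i ≤ N ∧ 1 ≤ j ∧ j ≤ N ∧ z i * z j < 0)
    (hlam : ∀ i, i ≤ N → 0 < lam i)
    (hμt : 0 < μtilde0)
    (hμhat : ∀ i, i ≤ N → 0 < μhat i)
    (μbar : ℕ → ℝ) (hμbar : ∀ i, μbar i = μhat i - lam i / lam 0 * μhat 0)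
    (c0s : ℝ → ℝ) (hc0spos : ∀ φ, 0 < c0s φ)
    (hc0seq : ∀ φ : ℝ, ∑ j ∈ Finset.range (N+1),
        lam j * (c0s φ) ^ (lam j / lam 0) * Real.exp (μbar j - z j * φ) = μtilde0)
    :
    ∀ φ : ℝ, deriv c0s φ = lam 0 * c0s φ * (∑ i ∈ Finset.Icc 1 N, z i * lam i * ((c0s φ) ^ (lam i / lam 0) * Real.exp (μbar i - z i * φ))) / (∑ i ∈ Finset.range (N+1), lam i ^ 2 * ((c0s φ) ^ (lam i / lam 0) * Real.exp (μbar i - z i * φ))) :=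
  stmt12_general N z lam μtilde0 hz0 hlam μbar c0s hc0spos hc0seq
end

section
/- As φ → +∞ one has c_0^*(φ) → 0 and c_i^*(φ) → 0 for every i ∈ {1, …, N} with z_i > 0; symmetrically, as φ → −∞ one has c_0^*(φ) → 0 and c_i^*(φ) → 0 for every i ∈ {1, …, N} with z_i < 0. -/
/-!
Every summand of the defining identity is positive, hence at most `μ̃₀`; so for each `i`,
`c₀^(λᵢ/λ₀) ≤ (μ̃₀/λᵢ) e^(zᵢφ - μ̄ᵢ)`. Since the valences take both signs, some `zᵢ φ` tends to
`-∞` in either direction, which forces `c₀ → 0`; then `cᵢ = c₀^(λᵢ/λ₀) e^(μ̄ᵢ - zᵢφ) → 0`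
whenever `zᵢ φ → +∞`.
-/

open Filter Real Set Topology

lemma tendsto_nhds_zero_of_tendsto_rpow {α : Type*} {l : Filter α} {f : α → ℝ} {p : ℝ}
    (hf : ∀ x, 0 ≤ f x) (hp : 0 < p) (h : Tendsto (fun x => f x ^ p) l (𝓝 0)) :
    Tendsto f l (𝓝 0) := by
  have h' := h.rpow_const (p := p⁻¹) (Or.inr (inv_nonneg.2 hp.le))
  rw [zero_rpow (inv_ne_zero hp.ne')] at h'
  refine h'.congr fun x => ?_
  rw [← rpow_mul (hf x), mul_inv_cancel₀ hp.ne', rpow_one]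

lemma tendsto_exp_sub_mul_nhds_zero {l : Filter ℝ} {b : ℝ} (a : ℝ)
    (hb : Tendsto (fun φ => b * φ) l atTop) :
    Tendsto (fun φ => exp (a - b * φ)) l (𝓝 0) := by
  refine tendsto_exp_atBot.comp ?_
  simpa only [sub_eq_add_neg, Function.comp_def] using
    tendsto_atBot_add_const_left l a (tendsto_neg_atTop_atBot.comp hb)

lemma tendsto_nhds_zero_of_rpow_mul_exp_le {l : Filter ℝ} {c : ℝ → ℝ} {w p a b M : ℝ}
    (hc : ∀ φ, 0 < c φ) (hw : 0 < w) (hp : 0 < p)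
    (hbound : ∀ φ, w * c φ ^ p * exp (a - b * φ) ≤ M)
    (hb : Tendsto (fun φ => b * φ) l atBot) :
    Tendsto c l (𝓝 0) := by
  have hb' : Tendsto (fun φ => -b * φ) l atTop := by
    simpa only [neg_mul, Function.comp_def] using tendsto_neg_atBot_atTop.comp hb
  have hle : ∀ φ, c φ ^ p ≤ M / w * exp (-a - -b * φ) := fun φ => by
    have hinv : exp (a - b * φ) * exp (-a - -b * φ) = 1 := by
      rw [← exp_add, ← exp_zero]; ring_nf
    calc c φ ^ p = w * c φ ^ p * exp (a - b * φ) * (exp (-a - -b * φ) / w) := by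
          rw [mul_assoc _ (exp _), mul_div_assoc', hinv]; field_simp
      _ ≤ M * (exp (-a - -b * φ) / w) := by gcongr; exact hbound φ
      _ = M / w * exp (-a - -b * φ) := by ring
  refine tendsto_nhds_zero_of_tendsto_rpow (fun φ => (hc φ).le) hp ?_
  refine squeeze_zero (fun φ => (rpow_pos_of_pos (hc φ) p).le) hle ?_
  simpa using (tendsto_exp_sub_mul_nhds_zero (-a) hb').const_mul (M / w)

lemma tendsto_rpow_mul_exp_nhds_zero {l : Filter ℝ} {c : ℝ → ℝ} {p b : ℝ} (a : ℝ)
    (hc : Tendsto c l (𝓝 0)) (hp : 0 < p) (hb : Tendsto (fun φ => b * φ) l atTop) :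
    Tendsto (fun φ => c φ ^ p * exp (a - b * φ)) l (𝓝 0) := by
  simpa [zero_rpow hp.ne'] using
    (hc.rpow_const (Or.inr hp.le)).mul (tendsto_exp_sub_mul_nhds_zero a hb)

section Equilibrium

variable {N : ℕ} {z lam μbar : ℕ → ℝ} {M : ℝ} {c : ℝ → ℝ}

lemma summand_le_of_sum_eq (hlam : ∀ i, i ≤ N → 0 < lam i) (hc : ∀ φ, 0 < c φ)
    (hsum : ∀ φ, ∑ j ∈ Finset.range (N + 1),
      lam j * c φ ^ (lam j / lam 0) * exp (μbar j - z j * φ) = M)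
    {i : ℕ} (hi : i ≤ N) (φ : ℝ) :
    lam i * c φ ^ (lam i / lam 0) * exp (μbar i - z i * φ) ≤ M := by
  rw [← hsum φ]
  refine Finset.single_le_sum (f := fun j => lam j * c φ ^ (lam j / lam 0) *
    exp (μbar j - z j * φ)) (fun j hj => ?_) (Finset.mem_range_succ_iff.2 hi)
  have := hlam j (Finset.mem_range_succ_iff.1 hj)
  have := hc φ
  positivity

lemma tendsto_nhds_zero_of_sum_eq (hlam : ∀ i, i ≤ N → 0 < lam i) (hc : ∀ φ, 0 < c φ)
    (hsum : ∀ φ, ∑ j ∈ Finset.range (N + 1),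
      lam j * c φ ^ (lam j / lam 0) * exp (μbar j - z j * φ) = M)
    {l : Filter ℝ} {i : ℕ} (hi : i ≤ N) (hzi : Tendsto (fun φ => z i * φ) l atBot) :
    Tendsto c l (𝓝 0) :=
  tendsto_nhds_zero_of_rpow_mul_exp_le hc (hlam i hi) (div_pos (hlam i hi) (hlam 0 N.zero_le))
    (summand_le_of_sum_eq hlam hc hsum hi) hzi

end Equilibrium

theorem stmt16_general
    (N : ℕ)
    (z lam : ℕ → ℝ) (μtilde0 : ℝ)
    (hmix : ∃ i j, 1 ≤ i ∧ i ≤ N ∧ 1 ≤ j ∧ j ≤ N ∧ z i * z j < 0)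
    (hlam : ∀ i, i ≤ N → 0 < lam i)
    (μbar : ℕ → ℝ)
    (c0s : ℝ → ℝ) (hc0spos : ∀ φ, 0 < c0s φ)
    (hc0seq : ∀ φ : ℝ, ∑ j ∈ Finset.range (N+1),
        lam j * (c0s φ) ^ (lam j / lam 0) * Real.exp (μbar j - z j * φ) = μtilde0)
    :
    Filter.Tendsto c0s Filter.atTop (nhds 0) ∧
    (∀ i, 1 ≤ i → i ≤ N → 0 < z i →
      Filter.Tendsto (fun φ : ℝ => (c0s φ) ^ (lam i / lam 0) * Real.exp (μbar i - z i * φ)) Filter.atTop (nhds 0)) ∧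
    Filter.Tendsto c0s Filter.atBot (nhds 0) ∧
    (∀ i, 1 ≤ i → i ≤ N → z i < 0 →
      Filter.Tendsto (fun φ : ℝ => (c0s φ) ^ (lam i / lam 0) * Real.exp (μbar i - z i * φ)) Filter.atBot (nhds 0)) := by
  obtain ⟨i, j, -, hiN, -, hjN, hij⟩ := hmix
  obtain ⟨⟨ip, hip, hpos⟩, ⟨ineg, hineg, hneg⟩⟩ : (∃ k ≤ N, 0 < z k) ∧ ∃ k ≤ N, z k < 0 := by
    rcases mul_neg_iff.1 hij with ⟨hi, hj⟩ | ⟨hi, hj⟩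
    exacts [⟨⟨i, hiN, hi⟩, j, hjN, hj⟩, ⟨⟨j, hjN, hj⟩, i, hiN, hi⟩]
  have hTop := tendsto_nhds_zero_of_sum_eq hlam hc0spos hc0seq hineg
    (tendsto_id.const_mul_atTop_of_neg hneg)
  have hBot := tendsto_nhds_zero_of_sum_eq hlam hc0spos hc0seq hip
    (tendsto_id.const_mul_atBot hpos)
  have hexp : ∀ k ≤ N, 0 < lam k / lam 0 := fun k hk => div_pos (hlam k hk) (hlam 0 N.zero_le)
  refine ⟨hTop, fun k _ hk hzk => ?_, hBot, fun k _ hk hzk => ?_⟩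
  · exact tendsto_rpow_mul_exp_nhds_zero _ hTop (hexp k hk) (tendsto_id.const_mul_atTop hzk)
  · exact tendsto_rpow_mul_exp_nhds_zero _ hBot (hexp k hk) (tendsto_id.const_mul_atBot_of_neg hzk)

theorem stmt16
    (N : ℕ) (hN : 1 ≤ N)
    (z lam μhat : ℕ → ℝ) (μtilde0 : ℝ)
    (hz0 : z 0 = 0)
    (hzne : ∀ i, 1 ≤ i → i ≤ N → z i ≠ 0)
    (hmix : ∃ i j, 1 ≤ i ∧ i ≤ N ∧ 1 ≤ j ∧ j ≤ N ∧ z i * z j < 0)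
    (hlam : ∀ i, i ≤ N → 0 < lam i)
    (hμt : 0 < μtilde0)
    (hμhat : ∀ i, i ≤ N → 0 < μhat i)
    (μbar : ℕ → ℝ) (hμbar : ∀ i, μbar i = μhat i - lam i / lam 0 * μhat 0)
    (c0s : ℝ → ℝ) (hc0spos : ∀ φ, 0 < c0s φ)
    (hc0seq : ∀ φ : ℝ, ∑ j ∈ Finset.range (N+1),
        lam j * (c0s φ) ^ (lam j / lam 0) * Real.exp (μbar j - z j * φ) = μtilde0)
    :
    Filter.Tendsto c0s Filter.atTop (nhds 0) ∧
    (∀ i, 1 ≤ i → i ≤ N → 0 < z i →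
      Filter.Tendsto (fun φ : ℝ => (c0s φ) ^ (lam i / lam 0) * Real.exp (μbar i - z i * φ)) Filter.atTop (nhds 0)) ∧
    Filter.Tendsto c0s Filter.atBot (nhds 0) ∧
    (∀ i, 1 ≤ i → i ≤ N → z i < 0 →
      Filter.Tendsto (fun φ : ℝ => (c0s φ) ^ (lam i / lam 0) * Real.exp (μbar i - z i * φ)) Filter.atBot (nhds 0)) :=
  stmt16_general N z lam μtilde0 hmix hlam μbar c0s hc0spos hc0seq
end

section
/- For every Λ ≥ 1 and every φ ∈ ℝ, c_{0,Λ}(φ) ≤ max{ μ̃_0/λ_0 + μ̂_0/λ_0^2, 1 }. In particular, c_{0,Λ} is bounded on ℝ uniformly in Λ ≥ 1. -/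
open Filter Real Set

lemma mul_le_sum_rpow_mul_exp {N : ℕ} {z lam μbar : ℕ → ℝ} (hz0 : z 0 = 0)
    (hlam : ∀ i, i ≤ N → 0 < lam i) (hμbar0 : μbar 0 = 0) {c : ℝ} (hc : 0 ≤ c) (φ : ℝ) :
    lam 0 * c ≤ ∑ j ∈ Finset.range (N + 1),
      lam j * c ^ (lam j / lam 0) * exp (μbar j - z j * φ) := by
  have hlam0 : lam 0 ≠ 0 := (hlam 0 N.zero_le).ne'
  have hterm0 : lam 0 * c ^ (lam 0 / lam 0) * exp (μbar 0 - z 0 * φ) = lam 0 * c := by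
    rw [div_self hlam0, rpow_one, hμbar0, hz0, zero_mul, sub_self, exp_zero, mul_one]
  rw [← hterm0]
  refine Finset.single_le_sum (f := fun j ↦ lam j * c ^ (lam j / lam 0) * exp (μbar j - z j * φ))
    (fun j hj ↦ ?_) (by simp)
  have := hlam j (Nat.lt_succ_iff.mp (Finset.mem_range.mp hj))
  positivity

lemma le_div_add_div_sq_of_mul_mul_le {Λ a c m n : ℝ} (hΛ : 1 ≤ Λ) (ha : 0 < a) (hn : 0 ≤ n)
    (h : Λ * a * (a * c) ≤ Λ * a * m + n) : c ≤ m / a + n / a ^ 2 := by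
  have hΛn : n ≤ Λ * n := le_mul_of_one_le_left hn hΛ
  have hsq : a ^ 2 * c ≤ a * m + n := by
    refine le_of_mul_le_mul_left ?_ (by linarith : (0 : ℝ) < Λ)
    nlinarith
  rw [div_add_div _ _ ha.ne' (by positivity), le_div_iff₀ (by positivity)]
  nlinarith

theorem stmt17_general
    (N : ℕ)
    (z lam μhat : ℕ → ℝ) (μtilde0 : ℝ)
    (hz0 : z 0 = 0)
    (hlam : ∀ i, i ≤ N → 0 < lam i)
    (hμhat : ∀ i, i ≤ N → 0 < μhat i)
    (μbar : ℕ → ℝ) (hμbar : ∀ i, μbar i = μhat i - lam i / lam 0 * μhat 0)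
    (c0 : ℝ → ℝ → ℝ)
    (hc0eq : ∀ Λ : ℝ, 0 < Λ → ∀ φ : ℝ, Real.log (c0 Λ φ)
        + Λ * lam 0 * ∑ j ∈ Finset.range (N+1),
            lam j * (c0 Λ φ) ^ (lam j / lam 0) * Real.exp (μbar j - z j * φ)
      = Λ * lam 0 * μtilde0 + μhat 0)
    :
    (∀ Λ : ℝ, 1 ≤ Λ → ∀ φ : ℝ,
      c0 Λ φ ≤ max (μtilde0 / lam 0 + μhat 0 / (lam 0) ^ 2) 1) ∧
    (∃ M : ℝ, ∀ Λ : ℝ, 1 ≤ Λ → ∀ φ : ℝ, c0 Λ φ ≤ M) := by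
  have hlam0 : 0 < lam 0 := hlam 0 N.zero_le
  have hμbar0 : μbar 0 = 0 := by rw [hμbar, div_self hlam0.ne', one_mul, sub_self]
  have key : ∀ Λ : ℝ, 1 ≤ Λ → ∀ φ : ℝ,
      c0 Λ φ ≤ max (μtilde0 / lam 0 + μhat 0 / (lam 0) ^ 2) 1 := by
    intro Λ hΛ φ
    rcases le_or_gt (c0 Λ φ) 1 with hc1 | hc1
    · exact le_max_of_le_right hc1
    refine le_max_of_le_left
      (le_div_add_div_sq_of_mul_mul_le hΛ hlam0 (hμhat 0 N.zero_le).le ?_)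
    -- where `c₀ > 1` its logarithm is nonnegative and can be dropped from the equation
    have hlog : 0 ≤ log (c0 Λ φ) := log_nonneg hc1.le
    have hsum := mul_le_sum_rpow_mul_exp (φ := φ) hz0 hlam hμbar0 (c := c0 Λ φ) (by linarith)
    have heq := hc0eq Λ (by linarith) φ
    linarith [mul_le_mul_of_nonneg_left hsum (by positivity : 0 ≤ Λ * lam 0)]
  exact ⟨key, _, key⟩

theorem stmt17
    (N : ℕ) (hN : 1 ≤ N)
    (z lam μhat : ℕ → ℝ) (μtilde0 : ℝ)
    (hz0 : z 0 = 0)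
    (hzne : ∀ i, 1 ≤ i → i ≤ N → z i ≠ 0)
    (hmix : ∃ i j, 1 ≤ i ∧ i ≤ N ∧ 1 ≤ j ∧ j ≤ N ∧ z i * z j < 0)
    (hlam : ∀ i, i ≤ N → 0 < lam i)
    (hμt : 0 < μtilde0)
    (hμhat : ∀ i, i ≤ N → 0 < μhat i)
    (μbar : ℕ → ℝ) (hμbar : ∀ i, μbar i = μhat i - lam i / lam 0 * μhat 0)
    (c0 : ℝ → ℝ → ℝ)
    (hc0pos : ∀ Λ : ℝ, 0 < Λ → ∀ φ, 0 < c0 Λ φ)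
    (hc0eq : ∀ Λ : ℝ, 0 < Λ → ∀ φ : ℝ, Real.log (c0 Λ φ)
        + Λ * lam 0 * ∑ j ∈ Finset.range (N+1),
            lam j * (c0 Λ φ) ^ (lam j / lam 0) * Real.exp (μbar j - z j * φ)
      = Λ * lam 0 * μtilde0 + μhat 0)
    :
    (∀ Λ : ℝ, 1 ≤ Λ → ∀ φ : ℝ,
      c0 Λ φ ≤ max (μtilde0 / lam 0 + μhat 0 / (lam 0) ^ 2) 1) ∧
    (∃ M : ℝ, ∀ Λ : ℝ, 1 ≤ Λ → ∀ φ : ℝ, c0 Λ φ ≤ M) :=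
  stmt17_general N z lam μhat μtilde0 hz0 hlam hμhat μbar hμbar c0 hc0eq
end

section
/- For every Λ > 0 and every ρ_0 ∈ ℝ there exists a unique real number φ̂_Λ such that ρ_0 + f_Λ(φ̂_Λ) = 0. -/
/-!
Write `u = log c₀`, `a_j = λ_j / λ₀` and `x_j(φ) = a_j u(φ) + μ̄_j - z_j φ`, so that
`c_j = exp x_j` and the equation defining `c₀` becomes the constraint `u + S ∑ a_j exp x_j = μ₀`
with `S = Λ λ₀²`. Since `exp` is increasing,
`P = ∑ (exp x_j(φ₂) - exp x_j(φ₁)) (x_j(φ₂) - x_j(φ₁)) ≥ 0`, and expanding `P` with the help of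
the constraint gives `S (φ₂ - φ₁) (f(φ₂) - f(φ₁)) = -(u(φ₂) - u(φ₁))² - S P`, which is negative
for `φ₁ ≠ φ₂` as soon as some `z_j ≠ 0`; so `f` is strictly decreasing. The left side of the constraint increases in `u` with slope at least `1`,
which makes `u` continuous. A negative valence forces `u → -∞` as `φ → ∞`, and then
`f ≤ D - k (μ₀ - u) / S` for `φ ≥ 0` gives `f → -∞`; reflecting `φ ↦ -φ`, a positive valence
gives `f → ∞` as `φ → -∞`. Hence `f` is a bijection of `ℝ`.
-/

open Filter Real Set

open Topology

lemma abs_sub_le_abs_sub_of_monotone_sub {g : ℝ → ℝ} (hg : Monotone fun v => g v - v)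
    (x y : ℝ) : |x - y| ≤ |g x - g y| := by
  rcases le_total x y with h | h
  · have : g x - x ≤ g y - y := hg h
    rw [abs_sub_comm x y, abs_sub_comm (g x), abs_of_nonneg (by linarith),
      abs_of_nonneg (by linarith)]
    linarith
  · have : g y - y ≤ g x - x := hg h
    rw [abs_of_nonneg (by linarith), abs_of_nonneg (by linarith)]
    linarith

lemma continuous_of_forall_apply_eq {G : ℝ → ℝ → ℝ} {u : ℝ → ℝ} {c : ℝ}
    (hmono : ∀ φ, Monotone fun v => G v φ - v) (hcont : ∀ v, Continuous (G v))
    (hu : ∀ φ, G (u φ) φ = c) : Continuous u := by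
  refine continuous_iff_continuousAt.2 fun φ₀ => ?_
  have hbound : ∀ φ, |u φ - u φ₀| ≤ |G (u φ₀) φ₀ - G (u φ₀) φ| := fun φ => by
    simpa only [hu] using abs_sub_le_abs_sub_of_monotone_sub (hmono φ) (u φ) (u φ₀)
  have hlim : Tendsto (fun φ => |G (u φ₀) φ₀ - G (u φ₀) φ|) (𝓝 φ₀) (𝓝 0) := by
    simpa using (((hcont (u φ₀)).tendsto φ₀).const_sub (G (u φ₀) φ₀)).abs
  rw [ContinuousAt, tendsto_iff_norm_sub_tendsto_zero]
  exact squeeze_zero (fun _ => norm_nonneg _) hbound hlim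

lemma exp_sub_exp_mul_sub_nonneg (x y : ℝ) : 0 ≤ (exp y - exp x) * (y - x) := by
  rcases le_total x y with h | h
  · exact mul_nonneg (sub_nonneg.2 (exp_le_exp.2 h)) (sub_nonneg.2 h)
  · exact mul_nonneg_of_nonpos_of_nonpos (sub_nonpos.2 (exp_le_exp.2 h)) (sub_nonpos.2 h)

lemma exp_sub_exp_mul_sub_pos {x y : ℝ} (h : x ≠ y) : 0 < (exp y - exp x) * (y - x) := by
  rcases h.lt_or_gt with h | h
  · exact mul_pos (sub_pos.2 (exp_lt_exp.2 h)) (sub_pos.2 h)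
  · exact mul_pos_of_neg_of_neg (sub_neg.2 (exp_lt_exp.2 h)) (sub_neg.2 h)

namespace Electrolyte

variable {ι : Type*} {s : Finset ι} {a b z : ι → ℝ} {u : ℝ → ℝ} {S μ₀ : ℝ}

/-- With `u = log c₀`, `a j = λ_j / λ₀` and `b = μ̄` this is the paper's `c_{j,Λ}`. -/
noncomputable def concentration (a b z : ι → ℝ) (u : ℝ → ℝ) (j : ι) (φ : ℝ) : ℝ :=
  exp (a j * u φ + b j - z j * φ)

noncomputable def netCharge (s : Finset ι) (a b z : ι → ℝ) (u : ℝ → ℝ) (φ : ℝ) :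
    ℝ :=
  ∑ j ∈ s, z j * concentration a b z u j φ

theorem concentration_pos (j : ι) (φ : ℝ) : 0 < concentration a b z u j φ := exp_pos _

theorem concentration_log {c : ℝ → ℝ} (j : ι) {φ : ℝ} (hc : 0 < c φ) :
    concentration a b z (fun φ => log (c φ)) j φ = c φ ^ a j * exp (b j - z j * φ) := by
  rw [concentration, rpow_def_of_pos hc, ← exp_add]
  ring_nf

theorem concentration_neg (j : ι) (φ : ℝ) :
    concentration a b (-z) (fun φ => u (-φ)) j φ = concentration a b z u j (-φ) := by
  simp only [concentration, Pi.neg_apply]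
  ring_nf

theorem netCharge_neg (φ : ℝ) :
    netCharge s a b (-z) (fun φ => u (-φ)) φ = -netCharge s a b z u (-φ) := by
  simp only [netCharge, concentration_neg, Pi.neg_apply, neg_mul, Finset.sum_neg_distrib]

theorem continuous_netCharge (hu : Continuous u) : Continuous (netCharge s a b z u) := by
  unfold netCharge concentration
  fun_prop

-- `k` is small enough that `z j + k a j ≤ 0` whenever `z j < 0`; the other terms are bounded
-- for `φ ≥ 0` because `u ≤ μ₀`.
theorem exists_netCharge_add_le (ha : ∀ j ∈ s, 0 ≤ a j) (hu : ∀ φ, u φ ≤ μ₀) :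
    ∃ k > 0, ∃ D, ∀ φ, 0 ≤ φ →
      netCharge s a b z u φ + k * ∑ j ∈ s, a j * concentration a b z u j φ ≤ D := by
  obtain ⟨k, hkz, hk⟩ : ∃ k, (∀ j ∈ s, z j < 0 → k * a j + z j < 0) ∧ 0 < k := by
    have hev : ∀ j ∈ s, ∀ᶠ k in 𝓝 (0 : ℝ), z j < 0 → k * a j + z j < 0 := by
      intro j _
      by_cases hz : z j < 0
      · have : Tendsto (fun k => k * a j + z j) (𝓝 0) (𝓝 (0 * a j + z j)) :=
          (by fun_prop : Continuous fun k : ℝ => k * a j + z j).tendsto 0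
        rw [zero_mul, zero_add] at this
        exact (this.eventually (gt_mem_nhds hz)).mono fun _ h _ => h
      · exact Eventually.of_forall fun _ h => absurd h hz
    exact (((eventually_all_finset s).2 hev).filter_mono nhdsWithin_le_nhds |>.and
      (self_mem_nhdsWithin (s := Ioi 0))).exists
  refine ⟨k, hk, ∑ j ∈ s, |z j + k * a j| * exp (a j * μ₀ + b j), fun φ hφ => ?_⟩
  have hterm : ∀ j ∈ s, (z j + k * a j) * concentration a b z u j φ ≤
      |z j + k * a j| * exp (a j * μ₀ + b j) := fun j hj => by
    by_cases hz : z j < 0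
    · have := hkz j hj hz
      calc (z j + k * a j) * concentration a b z u j φ ≤ 0 :=
            mul_nonpos_of_nonpos_of_nonneg (by linarith) (concentration_pos _ _).le
        _ ≤ _ := by positivity
    · have h0 : 0 ≤ z j + k * a j := by nlinarith [ha j hj]
      calc (z j + k * a j) * concentration a b z u j φ
          ≤ (z j + k * a j) * exp (a j * μ₀ + b j) := by
            unfold concentration
            gcongr
            nlinarith [mul_le_mul_of_nonneg_left (hu φ) (ha j hj), mul_nonneg (not_lt.1 hz) hφ]
        _ ≤ _ := by gcongr; exact le_abs_self _
  calc netCharge s a b z u φ + k * ∑ j ∈ s, a j * concentration a b z u j φ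
      = ∑ j ∈ s, (z j + k * a j) * concentration a b z u j φ := by
        simp only [netCharge, Finset.mul_sum, ← Finset.sum_add_distrib, add_mul, mul_assoc]
    _ ≤ _ := Finset.sum_le_sum hterm

variable (hconstr : ∀ φ, u φ + S * ∑ j ∈ s, a j * concentration a b z u j φ = μ₀)
include hconstr

theorem netCharge_strictAnti (hS : 0 < S) {i : ι} (hi : i ∈ s) (hzi : z i ≠ 0) :
    StrictAnti (netCharge s a b z u) := by
  intro φ₁ φ₂ hφ
  set P := ∑ j ∈ s, (concentration a b z u j φ₂ - concentration a b z u j φ₁) *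
    (a j * (u φ₂ - u φ₁) - z j * (φ₂ - φ₁))
  have hterm : ∀ j, (concentration a b z u j φ₂ - concentration a b z u j φ₁) *
      (a j * (u φ₂ - u φ₁) - z j * (φ₂ - φ₁)) =
      (exp (a j * u φ₂ + b j - z j * φ₂) - exp (a j * u φ₁ + b j - z j * φ₁)) *
      ((a j * u φ₂ + b j - z j * φ₂) - (a j * u φ₁ + b j - z j * φ₁)) := fun j => by
    unfold concentration; ring
  have hP : 0 ≤ P := Finset.sum_nonneg fun j _ => hterm j ▸ exp_sub_exp_mul_sub_nonneg _ _
  have hidentity : S * (φ₂ - φ₁) * (netCharge s a b z u φ₂ - netCharge s a b z u φ₁) =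
      -(u φ₂ - u φ₁) ^ 2 - S * P := by
    have hP_eq : P = (u φ₂ - u φ₁) * (∑ j ∈ s, a j * concentration a b z u j φ₂ -
        ∑ j ∈ s, a j * concentration a b z u j φ₁) -
        (φ₂ - φ₁) * (netCharge s a b z u φ₂ - netCharge s a b z u φ₁) := by
      simp only [P, netCharge, mul_sub, Finset.mul_sum, ← Finset.sum_sub_distrib]
      exact Finset.sum_congr rfl fun j _ => by ring
    rw [hP_eq]
    linear_combination (u φ₂ - u φ₁) * (hconstr φ₂ - hconstr φ₁)
  have hpos : 0 < (u φ₂ - u φ₁) ^ 2 + S * P := by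
    rcases eq_or_ne (u φ₂) (u φ₁) with hu | hu
    · have hPi : 0 < (concentration a b z u i φ₂ - concentration a b z u i φ₁) *
          (a i * (u φ₂ - u φ₁) - z i * (φ₂ - φ₁)) := by
        rw [hterm]
        refine exp_sub_exp_mul_sub_pos fun h => ?_
        rw [hu] at h
        exact hφ.ne (mul_left_cancel₀ hzi (by linarith))
      have := Finset.single_le_sum (fun j _ => hterm j ▸ exp_sub_exp_mul_sub_nonneg _ _) hi
      nlinarith [sq_nonneg (u φ₂ - u φ₁)]
    · have := pow_pos (abs_pos.2 (sub_ne_zero.2 hu)) 2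
      rw [sq_abs] at this
      nlinarith [mul_nonneg hS.le hP]
  nlinarith [mul_pos hS (sub_pos.2 hφ)]

theorem continuous_of_constraint (hS : 0 ≤ S) (ha : ∀ j ∈ s, 0 ≤ a j) : Continuous u := by
  refine continuous_of_forall_apply_eq
    (G := fun v φ => v + S * ∑ j ∈ s, a j * exp (a j * v + b j - z j * φ))
    (fun φ v w hvw => ?_)
    (fun v => by fun_prop) hconstr
  simp only [add_sub_cancel_left]
  gcongr with j hj <;> exact ha j hj

theorem le_of_constraint (hS : 0 ≤ S) (ha : ∀ j ∈ s, 0 ≤ a j) (φ : ℝ) :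
    u φ ≤ μ₀ := by
  have : 0 ≤ S * ∑ j ∈ s, a j * concentration a b z u j φ :=
    mul_nonneg hS (Finset.sum_nonneg fun j hj => mul_nonneg (ha j hj) (concentration_pos _ _).le)
  linarith [hconstr φ]

theorem tendsto_atTop_atBot_of_constraint (hS : 0 < S) (ha : ∀ j ∈ s, 0 ≤ a j) {i : ι}
    (hi : i ∈ s) (hai : 0 < a i) (hzi : z i < 0) : Tendsto u atTop atBot := by
  refine tendsto_atBot.2 fun L => ?_
  have hlim : Tendsto (fun φ => S * a i * exp (a i * L + b i + -z i * φ)) atTop atTop :=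
    (tendsto_exp_atTop.comp (tendsto_atTop_add_const_left _ _
      (tendsto_id.const_mul_atTop (neg_pos.2 hzi)))).const_mul_atTop (mul_pos hS hai)
  filter_upwards [hlim.eventually_gt_atTop (μ₀ - L)] with φ hφ
  by_contra! hL
  have : S * a i * exp (a i * L + b i + -z i * φ) ≤ μ₀ - u φ :=
    calc S * a i * exp (a i * L + b i + -z i * φ)
        ≤ S * (a i * concentration a b z u i φ) := by
          rw [mul_assoc, concentration, neg_mul, ← sub_eq_add_neg]
          gcongr
        _ ≤ S * ∑ j ∈ s, a j * concentration a b z u j φ := by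
          gcongr
          exact Finset.single_le_sum
            (fun j hj => mul_nonneg (ha j hj) (concentration_pos j φ).le) hi
        _ = μ₀ - u φ := by linarith [hconstr φ]
  linarith

theorem tendsto_netCharge_atTop_atBot (hS : 0 < S) (ha : ∀ j ∈ s, 0 ≤ a j) {i : ι}
    (hi : i ∈ s) (hai : 0 < a i) (hzi : z i < 0) :
    Tendsto (netCharge s a b z u) atTop atBot := by
  obtain ⟨k, hk, D, hD⟩ := exists_netCharge_add_le ha (le_of_constraint hconstr hS.le ha)
  have hu := tendsto_atTop_atBot_of_constraint hconstr hS ha hi hai hzi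
  refine tendsto_atBot_mono' _ ((eventually_ge_atTop 0).mono fun φ hφ => ?_)
    (tendsto_atBot_add_const_left _ (D - k / S * μ₀) (hu.const_mul_atBot (div_pos hk hS)))
  have h := hD φ hφ
  have hsum : ∑ j ∈ s, a j * concentration a b z u j φ = (μ₀ - u φ) / S := by
    field_simp
    linarith [hconstr φ]
  rw [hsum] at h
  calc netCharge s a b z u φ ≤ D - k * ((μ₀ - u φ) / S) := by linarith
    _ = D - k / S * μ₀ + k / S * u φ := by ring

theorem tendsto_netCharge_atBot_atTop (hS : 0 < S) (ha : ∀ j ∈ s, 0 ≤ a j) {i : ι}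
    (hi : i ∈ s) (hai : 0 < a i) (hzi : 0 < z i) :
    Tendsto (netCharge s a b z u) atBot atTop := by
  have hconstr' : ∀ φ, u (-φ) +
      S * ∑ j ∈ s, a j * concentration a b (-z) (fun φ => u (-φ)) j φ = μ₀ :=
    fun φ => by simpa only [concentration_neg] using hconstr (-φ)
  have := tendsto_neg_atBot_atTop.comp ((tendsto_netCharge_atTop_atBot hconstr' hS ha hi hai
    (neg_neg_of_pos hzi)).comp tendsto_neg_atBot_atTop)
  simpa [Function.comp_def, netCharge_neg] using this

theorem netCharge_bijective (hS : 0 < S) (ha : ∀ j ∈ s, 0 < a j)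
    (hmix : ∃ p ∈ s, ∃ q ∈ s, z p * z q < 0) : Function.Bijective (netCharge s a b z u) := by
  obtain ⟨p, hp, q, hq, hpq⟩ := hmix
  wlog hzp : 0 < z p generalizing p q
  · exact this q hq p hp (by rwa [mul_comm]) (pos_of_mul_neg_right hpq (not_lt.1 hzp))
  have hzq : z q < 0 := neg_of_mul_neg_right hpq hzp.le
  have ha' : ∀ j ∈ s, 0 ≤ a j := fun j hj => (ha j hj).le
  refine ⟨(netCharge_strictAnti hconstr hS hq hzq.ne).injective, ?_⟩
  exact (continuous_netCharge (continuous_of_constraint hconstr hS.le ha')).surjective'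
    (tendsto_netCharge_atBot_atTop hconstr hS ha' hp (ha p hp) hzp)
    (tendsto_netCharge_atTop_atBot hconstr hS ha' hq (ha q hq) hzq)

end Electrolyte

theorem stmt18_general
    (N : ℕ)
    (z lam μhat : ℕ → ℝ) (μtilde0 : ℝ)
    (hz0 : z 0 = 0)
    (hmix : ∃ i j, 1 ≤ i ∧ i ≤ N ∧ 1 ≤ j ∧ j ≤ N ∧ z i * z j < 0)
    (hlam : ∀ i, i ≤ N → 0 < lam i)
    (μbar : ℕ → ℝ)
    (Λ : ℝ) (hΛ : 0 < Λ)
    (c0 : ℝ → ℝ) (hc0pos : ∀ φ, 0 < c0 φ)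
    (hc0eq : ∀ φ : ℝ, Real.log (c0 φ)
        + Λ * lam 0 * ∑ j ∈ Finset.range (N+1),
            lam j * (c0 φ) ^ (lam j / lam 0) * Real.exp (μbar j - z j * φ)
      = Λ * lam 0 * μtilde0 + μhat 0)
    :
    ∀ ρ₀ : ℝ, ∃! φ : ℝ, ρ₀ + (∑ i ∈ Finset.Icc 1 N, z i * ((c0 φ) ^ (lam i / lam 0) * Real.exp (μbar i - z i * φ))) = 0 := by
  intro ρ₀
  set a : ℕ → ℝ := fun j => lam j / lam 0
  set u : ℝ → ℝ := fun φ => log (c0 φ)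
  have hl0 : 0 < lam 0 := hlam 0 N.zero_le
  have ha : ∀ j ∈ Finset.range (N + 1), 0 < a j := fun j hj =>
    div_pos (hlam j (Finset.mem_range_succ_iff.1 hj)) hl0
  have hc : ∀ j φ, Electrolyte.concentration a μbar z u j φ =
      c0 φ ^ (lam j / lam 0) * exp (μbar j - z j * φ) :=
    fun j φ => Electrolyte.concentration_log j (hc0pos φ)
  have hconstr : ∀ φ, u φ + Λ * lam 0 ^ 2 * ∑ j ∈ Finset.range (N + 1),
      a j * Electrolyte.concentration a μbar z u j φ = Λ * lam 0 * μtilde0 + μhat 0 := by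
    intro φ
    rw [← hc0eq φ, Finset.mul_sum, Finset.mul_sum]
    congr 1
    refine Finset.sum_congr rfl fun j _ => ?_
    simp only [hc, a]
    field_simp
  have hcharge : ∀ φ, ∑ i ∈ Finset.Icc 1 N, z i * (c0 φ ^ (lam i / lam 0) *
      exp (μbar i - z i * φ)) = Electrolyte.netCharge (Finset.range (N + 1)) a μbar z u φ := by
    intro φ
    simp only [Electrolyte.netCharge, hc]
    rw [Finset.range_eq_Ico, Finset.sum_eq_sum_Ico_succ_bot N.succ_pos, hz0, zero_mul,
      zero_add, zero_add, Nat.succ_eq_add_one, Finset.Ico_add_one_right_eq_Icc]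
  obtain ⟨i, j, -, hi, -, hj, hzz⟩ := hmix
  have hbij := Electrolyte.netCharge_bijective hconstr (by positivity) ha
    ⟨i, Finset.mem_range_succ_iff.2 hi, j, Finset.mem_range_succ_iff.2 hj, hzz⟩
  obtain ⟨φ, hφ, huniq⟩ := hbij.existsUnique (-ρ₀)
  simp only [hcharge]
  exact ⟨φ, by linarith, fun y hy => huniq y (by linarith)⟩

theorem stmt18
    (N : ℕ) (hN : 1 ≤ N)
    (z lam μhat : ℕ → ℝ) (μtilde0 : ℝ)
    (hz0 : z 0 = 0)
    (hzne : ∀ i, 1 ≤ i → i ≤ N → z i ≠ 0)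
    (hmix : ∃ i j, 1 ≤ i ∧ i ≤ N ∧ 1 ≤ j ∧ j ≤ N ∧ z i * z j < 0)
    (hlam : ∀ i, i ≤ N → 0 < lam i)
    (hμt : 0 < μtilde0)
    (hμhat : ∀ i, i ≤ N → 0 < μhat i)
    (μbar : ℕ → ℝ) (hμbar : ∀ i, μbar i = μhat i - lam i / lam 0 * μhat 0)
    (Λ : ℝ) (hΛ : 0 < Λ)
    (c0 : ℝ → ℝ) (hc0pos : ∀ φ, 0 < c0 φ)
    (hc0eq : ∀ φ : ℝ, Real.log (c0 φ)
        + Λ * lam 0 * ∑ j ∈ Finset.range (N+1),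
            lam j * (c0 φ) ^ (lam j / lam 0) * Real.exp (μbar j - z j * φ)
      = Λ * lam 0 * μtilde0 + μhat 0)
    :
    ∀ ρ₀ : ℝ, ∃! φ : ℝ, ρ₀ + (∑ i ∈ Finset.Icc 1 N, z i * ((c0 φ) ^ (lam i / lam 0) * Real.exp (μbar i - z i * φ))) = 0 :=
  stmt18_general N z lam μhat μtilde0 hz0 hmix hlam μbar Λ hΛ c0 hc0pos hc0eq
end
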